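/- arXiv:1102.1324 — 8 statements merged into one kernel-verified Lean document; each statement's English description precedes it below -/
import Mathlib

section
/- Let Λ be a separable Hilbert space and A, B bounded positive operators on Λ with closed range. Define A ⪯ B to mean: for every ξ ∈ Λ there exists η ∈ Λ with Aξ = Bη and (Aξ, ξ) = (Bη, η). Then A ⪯ B if and only if ran(A) ⊆ ran(B) and P_{B,A} B⁻¹ = A⁻¹ on ran(A), where B⁻¹ denotes the inverse of B restricted to ran(B), A⁻¹ the inverse of A restricted to ran(A), and P_{B,A} the orthogonal projection of ran(B) onto ran(A). -/
open MeasureTheory ContinuousLinearMap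
open scoped ComplexOrder

noncomputable section

local notation "⟪" x ", " y "⟫" => @inner ℂ _ _ x y

section Defs

variable {X : Type*} {Λ : Type*} [NormedAddCommGroup Λ] [InnerProductSpace ℂ Λ]

/-- Data exhibiting a Hilbert space `H`, embedded in the `Λ`-valued functions on `X` by `J`,
as the reproducing kernel Hilbert space of the operator-valued kernel `K`;
`kf x ξ` is the element representing `K(x,·)ξ`. -/
structure IsVRKHS (K : X → X → Λ →L[ℂ] Λ) (H : Type*) [NormedAddCommGroup H]
    [InnerProductSpace ℂ H] (J : H →ₗ[ℂ] (X → Λ)) (kf : X → Λ → H) : Prop where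
  inj : Function.Injective J
  kfun_eq : ∀ (x : X) (ξ : Λ), J (kf x ξ) = fun y => K x y ξ
  repro : ∀ (f : H) (x : X) (ξ : Λ), ⟪kf x ξ, f⟫ = ⟪ξ, J f x⟫

/-- Data exhibiting `H` as the RKHS of a scalar-valued kernel `k` on `Y`. -/
structure IsSRKHS {Y : Type*} (k : Y → Y → ℂ) (H : Type*) [NormedAddCommGroup H]
    [InnerProductSpace ℂ H] (J : H →ₗ[ℂ] (Y → ℂ)) (kf : Y → H) : Prop where
  inj : Function.Injective J
  kfun_eq : ∀ y : Y, J (kf y) = fun z => k y z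
  repro : ∀ (f : H) (y : Y), ⟪kf y, f⟫ = J f y

/-- `H₁ ⪯ H₂` : every element of `H₁` is an element of `H₂` (as functions) with the same norm. -/
def RKHSle {H₁ H₂ V : Type*} [NormedAddCommGroup H₁] [InnerProductSpace ℂ H₁]
    [NormedAddCommGroup H₂] [InnerProductSpace ℂ H₂] [AddCommGroup V] [Module ℂ V]
    (J₁ : H₁ →ₗ[ℂ] V) (J₂ : H₂ →ₗ[ℂ] V) : Prop :=
  ∀ f : H₁, ∃ g : H₂, J₂ g = J₁ f ∧ ‖g‖ = ‖f‖

/-- `K` is an `𝓛(Λ)`-valued reproducing kernel: hermitian and positive-definite. -/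
def IsOpKernel [CompleteSpace Λ] (K : X → X → Λ →L[ℂ] Λ) : Prop :=
  (∀ x y, K x y = ContinuousLinearMap.adjoint (K y x)) ∧
    ∀ (n : ℕ) (x : Fin n → X) (ξ : Fin n → Λ),
      0 ≤ ∑ j, ∑ k, ⟪ξ k, K (x j) (x k) (ξ j)⟫

/-- `k` is a scalar-valued reproducing kernel: hermitian and positive-definite. -/
def IsScalarKernel {Y : Type*} (k : Y → Y → ℂ) : Prop :=
  (∀ y z, k z y = starRingEnd ℂ (k y z)) ∧
    ∀ (n : ℕ) (y : Fin n → Y) (c : Fin n → ℂ),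
      0 ≤ ∑ j, ∑ l, starRingEnd ℂ (c l) * c j * k (y j) (y l)

/-- The relation `A ⪯ B` for positive operators. -/
def OpPrec (A B : Λ →L[ℂ] Λ) : Prop :=
  ∀ ξ : Λ, ∃ η : Λ, A ξ = B η ∧ ⟪ξ, A ξ⟫ = ⟪η, B η⟫

end Defs

/-! For symmetric `B` the value `⟪η, B η⟫` depends only on `B η`, so `A ⪯ B` says that the
quadratic forms of `A` and `B` agree whenever `A ξ = B η`; polarization turns this into
`⟪B η₁, η₂⟫ = ⟪A ξ₁, ξ₂⟫`, which is the orthogonality of `η - ζ` to `ran A`. Conversely, the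
orthogonal projections onto the closed ranges give representatives `ζ ∈ ran A`, `η ∈ ran B` of
`A ξ`, and the orthogonality of `η - ζ` to `A ξ` is exactly the equality of quadratic forms. -/

namespace LinearMap.IsSymmetric

variable {𝕜 E : Type*} [RCLike 𝕜] [NormedAddCommGroup E] [InnerProductSpace 𝕜 E]
  {T : E →ₗ[𝕜] E}

theorem inner_self_apply_eq_of_apply_eq (hT : T.IsSymmetric) {u v : E} (h : T u = T v) :
    inner 𝕜 u (T u) = inner 𝕜 v (T v) := by
  rw [h, ← hT, h, hT]

theorem exists_mem_range_apply_eq (hT : T.IsSymmetric) [(range T).HasOrthogonalProjection]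
    (x : E) : ∃ y ∈ range T, T y = T x := by
  refine ⟨(range T).starProjection x, (range T).starProjection_apply_mem x, ?_⟩
  have hker : x - (range T).starProjection x ∈ ker T :=
    hT.orthogonal_range ▸ (range T).sub_starProjection_mem_orthogonal x
  rw [mem_ker, map_sub, sub_eq_zero] at hker
  exact hker.symm

end LinearMap.IsSymmetric

namespace OpPrec

variable {Λ : Type*} [NormedAddCommGroup Λ] [InnerProductSpace ℂ Λ] {A B : Λ →L[ℂ] Λ}

theorem range_subset (h : OpPrec A B) : Set.range A ⊆ Set.range B := by
  rintro _ ⟨ξ, rfl⟩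
  obtain ⟨η, hη, -⟩ := h ξ
  exact ⟨η, hη.symm⟩

theorem inner_self_apply_eq (h : OpPrec A B) (hB : B.IsSymmetric) {ξ η : Λ}
    (hξη : A ξ = B η) : ⟪ξ, A ξ⟫ = ⟪η, B η⟫ := by
  obtain ⟨η', hη', hq⟩ := h ξ
  exact hq.trans (hB.inner_self_apply_eq_of_apply_eq (hη'.symm.trans hξη))

theorem inner_apply_eq (h : OpPrec A B) (hB : B.IsSymmetric) {ξ₁ ξ₂ η₁ η₂ : Λ}
    (h₁ : A ξ₁ = B η₁) (h₂ : A ξ₂ = B η₂) : ⟪B η₁, η₂⟫ = ⟪A ξ₁, ξ₂⟫ := by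
  have quad : ∀ ξ η, A ξ = B η → ⟪B η, η⟫ = ⟪A ξ, ξ⟫ := fun ξ η hξη => by
    rw [← inner_conj_symm, ← h.inner_self_apply_eq hB hξη, inner_conj_symm]
  have polA := inner_map_polarization' (A : Λ →ₗ[ℂ] Λ) ξ₁ ξ₂
  have polB := inner_map_polarization' (B : Λ →ₗ[ℂ] Λ) η₁ η₂
  simp only [coe_coe] at polA polB
  rw [polA, polB, quad (ξ₁ + ξ₂) (η₁ + η₂) (by simp [h₁, h₂]),
    quad (ξ₁ - ξ₂) (η₁ - η₂) (by simp [h₁, h₂]),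
    quad (ξ₁ + Complex.I • ξ₂) (η₁ + Complex.I • η₂) (by simp [h₁, h₂]),
    quad (ξ₁ - Complex.I • ξ₂) (η₁ - Complex.I • η₂) (by simp [h₁, h₂])]

theorem inner_sub_apply_eq_zero (h : OpPrec A B) (hA : A.IsSymmetric) (hB : B.IsSymmetric)
    {ξ η ζ : Λ} (hη : B η = A ξ) (hζ : A ζ = A ξ) (w : Λ) : ⟪η - ζ, A w⟫ = 0 := by
  obtain ⟨η₂, hη₂, -⟩ := h w
  have hηw : ⟪η, A w⟫ = ⟪A ξ, w⟫ := by
    rw [hη₂, ← h.inner_apply_eq hB hη.symm hη₂]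
    exact (hB η η₂).symm
  have hζw : ⟪ζ, A w⟫ = ⟪A ξ, w⟫ := by
    rw [← hζ]
    exact (hA ζ w).symm
  rw [inner_sub_left, hηw, hζw, sub_self]

theorem of_range_subset (hA : A.IsSymmetric) (hB : B.IsSymmetric)
    [(LinearMap.range (A : Λ →ₗ[ℂ] Λ)).HasOrthogonalProjection]
    [(LinearMap.range (B : Λ →ₗ[ℂ] Λ)).HasOrthogonalProjection]
    (hsub : Set.range A ⊆ Set.range B)
    (horth : ∀ ξ η ζ : Λ, η ∈ Set.range B → ζ ∈ Set.range A → B η = A ξ → A ζ = A ξ →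
      ⟪η - ζ, A ξ⟫ = 0) :
    OpPrec A B := by
  intro ξ
  obtain ⟨ζ, hζA, hζ : A ζ = A ξ⟩ := hA.exists_mem_range_apply_eq ξ
  obtain ⟨η₀, hη₀⟩ := hsub ⟨ξ, rfl⟩
  obtain ⟨η, hηB, hη : B η = B η₀⟩ := hB.exists_mem_range_apply_eq η₀
  have hBη : B η = A ξ := hη.trans hη₀
  have hηζ := horth ξ η ζ (LinearMap.mem_range.mp hηB) (LinearMap.mem_range.mp hζA) hBη hζ
  refine ⟨η, hBη.symm, ?_⟩
  calc ⟪ξ, A ξ⟫ = ⟪ζ, A ζ⟫ := (hA.inner_self_apply_eq_of_apply_eq hζ).symm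
    _ = ⟪ζ, A ξ⟫ := by rw [hζ]
    _ = ⟪η, A ξ⟫ := (sub_eq_zero.mp (by rwa [← inner_sub_left])).symm
    _ = ⟪η, B η⟫ := by rw [hBη]

end OpPrec

theorem stmt0_general {Λ : Type*} [NormedAddCommGroup Λ] [InnerProductSpace ℂ Λ] [CompleteSpace Λ]
    (A B : Λ →L[ℂ] Λ) (hA : A.IsPositive) (hB : B.IsPositive)
    (hrA : IsClosed (Set.range A)) (hrB : IsClosed (Set.range B)) :
    OpPrec A B ↔
      Set.range A ⊆ Set.range B ∧
        ∀ ξ η ζ : Λ, ξ ∈ Set.range A → η ∈ Set.range B → ζ ∈ Set.range A →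
          B η = ξ → A ζ = ξ → ∀ w ∈ Set.range A, ⟪η - ζ, w⟫ = 0 := by
  have : CompleteSpace (LinearMap.range (A : Λ →ₗ[ℂ] Λ)) := hrA.completeSpace_coe
  have : CompleteSpace (LinearMap.range (B : Λ →ₗ[ℂ] Λ)) := hrB.completeSpace_coe
  constructor
  · intro h
    refine ⟨h.range_subset, ?_⟩
    rintro _ η ζ ⟨ξ, rfl⟩ - - hη hζ _ ⟨w, rfl⟩
    exact h.inner_sub_apply_eq_zero hA.isSymmetric hB.isSymmetric hη hζ w
  · rintro ⟨hsub, horth⟩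
    refine OpPrec.of_range_subset hA.isSymmetric hB.isSymmetric hsub ?_
    intro ξ η ζ hη hζ hBη hAζ
    exact horth _ η ζ ⟨ξ, rfl⟩ hη hζ hBη hAζ _ ⟨ξ, rfl⟩

/-- For positive operators  with closed range on a separable Hilbert space,
 iff  and  on  (the latter phrased via the
characterization of the orthogonal projection: whenever  and  with
, , the difference  is orthogonal to ). -/
theorem stmt0 {Λ : Type*} [NormedAddCommGroup Λ] [InnerProductSpace ℂ Λ] [CompleteSpace Λ]
    [TopologicalSpace.SeparableSpace Λ]
    (A B : Λ →L[ℂ] Λ) (hA : A.IsPositive) (hB : B.IsPositive)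
    (hrA : IsClosed (Set.range A)) (hrB : IsClosed (Set.range B)) :
    OpPrec A B ↔
      Set.range A ⊆ Set.range B ∧
        ∀ ξ η ζ : Λ, ξ ∈ Set.range A → η ∈ Set.range B → ζ ∈ Set.range A →
          B η = ξ → A ζ = ξ → ∀ w ∈ Set.range A, ⟪η - ζ, w⟫ = 0 :=
  stmt0_general A B hA hB hrA hrB
end
end

section
/- Let Λ be a Hilbert space and A, B bounded positive operators on Λ with closed range, with the relation A ⪯ B meaning: for every ξ ∈ Λ there exists η ∈ Λ with Aξ = Bη and (Aξ, ξ) = (Bη, η). If A is surjective, then A ⪯ B if and only if A = B. -/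
open MeasureTheory ContinuousLinearMap
open scoped ComplexOrder

noncomputable section

local notation "⟪" x ", " y "⟫" => @inner ℂ _ _ x y

/-! A positive operator that is onto is also one-to-one, its kernel being the orthogonal
complement of its range. Given `A ⪯ B`, the operator `B` is onto as well, and for every `ζ` the
witnesses `ξ = A⁻¹ ζ`, `η = B⁻¹ ζ` give `⟪A⁻¹ ζ, ζ⟫ = ⟪B⁻¹ ζ, ζ⟫`. Over `ℂ` the quadratic form
determines the operator, so `A⁻¹ = B⁻¹`. -/

theorem LinearMap.IsSymmetric.bijective_of_surjective {𝕜 E : Type*} [RCLike 𝕜]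
    [NormedAddCommGroup E] [InnerProductSpace 𝕜 E] {T : E →ₗ[𝕜] E} (hT : T.IsSymmetric)
    (hs : Function.Surjective T) : Function.Bijective T := by
  refine ⟨?_, hs⟩
  rw [← LinearMap.ker_eq_bot, ← hT.orthogonal_range, LinearMap.range_eq_top.mpr hs,
    Submodule.top_orthogonal_eq_bot]

section OpPrec

variable {Λ : Type*} [NormedAddCommGroup Λ] [InnerProductSpace ℂ Λ] {A B : Λ →L[ℂ] Λ}

theorem OpPrec.refl (A : Λ →L[ℂ] Λ) : OpPrec A A := fun ξ => ⟨ξ, rfl, rfl⟩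

theorem OpPrec.surjective (h : OpPrec A B) (hA : Function.Surjective A) :
    Function.Surjective B := fun ζ => by
  obtain ⟨ξ, rfl⟩ := hA ζ
  obtain ⟨η, hAB, -⟩ := h ξ
  exact ⟨η, hAB.symm⟩

theorem OpPrec.eq_of_bijective (h : OpPrec A B) (hA : Function.Bijective A)
    (hB : Function.Bijective B) : A = B := by
  let eA := LinearEquiv.ofBijective (A : Λ →ₗ[ℂ] Λ) hA
  let eB := LinearEquiv.ofBijective (B : Λ →ₗ[ℂ] Λ) hB
  have hinv : (eA.symm : Λ →ₗ[ℂ] Λ) = eB.symm := by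
    refine (ext_inner_map _ _).mp fun ζ => ?_
    obtain ⟨η, hAB, hinner⟩ := h (eA.symm ζ)
    have hAζ : A (eA.symm ζ) = ζ := eA.apply_symm_apply ζ
    have hη : eB.symm ζ = η := eB.symm_apply_eq.mpr (hAB ▸ hAζ).symm
    calc ⟪eA.symm ζ, ζ⟫ = ⟪eA.symm ζ, A (eA.symm ζ)⟫ := by rw [hAζ]
      _ = ⟪η, B η⟫ := hinner
      _ = ⟪eB.symm ζ, ζ⟫ := by rw [hη, ← hAB, hAζ]
  have heq : eA = eB :=
    LinearEquiv.symm_bijective.injective (LinearEquiv.toLinearMap_injective hinv)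
  ext ξ
  exact LinearEquiv.congr_fun heq ξ

end OpPrec

theorem stmt1_general {Λ : Type*} [NormedAddCommGroup Λ] [InnerProductSpace ℂ Λ]
    (A B : Λ →L[ℂ] Λ) (hA : A.IsPositive) (hB : B.IsPositive)
    (hsurj : Function.Surjective A) :
    OpPrec A B ↔ A = B := by
  constructor
  · intro h
    exact h.eq_of_bijective (hA.isSymmetric.bijective_of_surjective hsurj)
      (hB.isSymmetric.bijective_of_surjective (h.surjective hsurj))
  · rintro rfl
    exact OpPrec.refl A

/-- If A is surjective (and A, B positive with closed range), then A ⪯ B iff A = B. -/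
theorem stmt1 {Λ : Type*} [NormedAddCommGroup Λ] [InnerProductSpace ℂ Λ] [CompleteSpace Λ]
    (A B : Λ →L[ℂ] Λ) (hA : A.IsPositive) (hB : B.IsPositive)
    (hrA : IsClosed (Set.range A)) (hrB : IsClosed (Set.range B))
    (hsurj : Function.Surjective A) :
    OpPrec A B ↔ A = B :=
  stmt1_general A B hA hB hsurj
end
end

section
/- Let A, B ∈ 𝓛₊(Λ) with A ⪯ B (i.e., for each ξ there is η with Aξ = Bη and (Aξ, ξ) = (Bη, η)), where A and B have closed range. Then for all ξ, ξ' ∈ Λ, setting η_ξ := B⁻¹Aξ, one has (Aξ', ξ) = (Bη_{ξ'}, η_ξ); in particular A B⁻¹ A = A on ran(A). -/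
open MeasureTheory ContinuousLinearMap
open scoped ComplexOrder

noncomputable section

local notation "⟪" x ", " y "⟫" => @inner ℂ _ _ x y

/-! With `A x = B ν` and `⟪x, A x⟫ = ⟪ν, B ν⟫`, positivity of `B` at `x - ν` gives
`⟪x, A x⟫ ≤ ⟪x, B x⟫`, i.e. `A ≤ B`. If `B η = A ξ`, expanding shows
`⟪η - ξ, A (η - ξ)⟫ = ⟪η, A η⟫ - ⟪η, B η⟫ ≤ 0`, so `A (η - ξ) = 0` because `A` is positive:
this is `A B⁻¹ A = A`, and the identity of sesquilinear forms follows from it by symmetry of `A`,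
without polarization. -/

open scoped InnerProductSpace

namespace ContinuousLinearMap

variable {𝕜 E : Type*} [RCLike 𝕜] [NormedAddCommGroup E] [InnerProductSpace 𝕜 E]

theorem IsPositive.norm_inner_apply_sq_le {T : E →L[𝕜] E} (hT : T.IsPositive) (x y : E) :
    ‖⟪x, T y⟫_𝕜‖ ^ 2 ≤ RCLike.re ⟪x, T x⟫_𝕜 * RCLike.re ⟪y, T y⟫_𝕜 := by
  let core : PreInnerProductSpace.Core 𝕜 E :=
    { inner := fun a b => ⟪a, T b⟫_𝕜
      conj_inner_symm := fun a b => by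
        simp only [inner_conj_symm, hT.inner_left_eq_inner_right]
      re_inner_nonneg := hT.re_inner_nonneg_right
      add_left := fun _ _ _ => inner_add_left _ _ _
      smul_left := fun _ _ _ => inner_smul_left _ _ _ }
  have hswap : ‖⟪y, T x⟫_𝕜‖ = ‖⟪x, T y⟫_𝕜‖ := by
    rw [← hT.inner_left_eq_inner_right, ← inner_conj_symm, RCLike.norm_conj]
  calc ‖⟪x, T y⟫_𝕜‖ ^ 2 = ‖⟪x, T y⟫_𝕜‖ * ‖⟪y, T x⟫_𝕜‖ := by rw [sq, hswap]
    _ ≤ _ := @InnerProductSpace.Core.inner_mul_inner_self_le 𝕜 E _ _ _ core x y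

theorem IsPositive.apply_eq_zero_of_re_inner_eq_zero {T : E →L[𝕜] E} (hT : T.IsPositive)
    {x : E} (hx : RCLike.re ⟪x, T x⟫_𝕜 = 0) : T x = 0 := by
  have h := hT.norm_inner_apply_sq_le (T x) x
  rw [hx, mul_zero, hT.inner_left_eq_inner_right] at h
  have : ⟪x, T (T x)⟫_𝕜 = 0 := norm_eq_zero.mp (pow_eq_zero_iff two_ne_zero |>.mp
    (le_antisymm h (sq_nonneg _)))
  rwa [← hT.inner_left_eq_inner_right, inner_self_eq_zero] at this

end ContinuousLinearMap

theorem LinearMap.IsSymmetric.inner_apply_self_eq_of_apply_eq {𝕜 E : Type*} [RCLike 𝕜]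
    [NormedAddCommGroup E] [InnerProductSpace 𝕜 E] {T : E →ₗ[𝕜] E} (hT : T.IsSymmetric)
    {x y : E} (hxy : T x = T y) : ⟪x, T x⟫_𝕜 = ⟪y, T y⟫_𝕜 := by
  rw [hxy, ← hT x y, hxy, hT]

namespace OpPrec

variable {Λ : Type*} [NormedAddCommGroup Λ] [InnerProductSpace ℂ Λ] {A B : Λ →L[ℂ] Λ}

theorem inner_apply_self_eq (h : OpPrec A B) (hB : B.IsSymmetric) {ξ η : Λ} (hη : B η = A ξ) :
    ⟪ξ, A ξ⟫ = ⟪η, B η⟫ := by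
  obtain ⟨η₀, hη₀, hq⟩ := h ξ
  rw [hq]
  exact (hB.inner_apply_self_eq_of_apply_eq (hη.trans hη₀)).symm

theorem le (h : OpPrec A B) (hA : A.IsSymmetric) (hB : B.IsPositive) : A ≤ B := by
  refine ⟨hB.isSymmetric.sub hA, fun x => ?_⟩
  obtain ⟨ν, hν, hq⟩ := h x
  have hexpand : ⟪x - ν, B (x - ν)⟫ = ⟪(B - A) x, x⟫ := by
    have hAx : ⟪A x, x⟫ = ⟪x, A x⟫ := hA x x
    have h₁ : ⟪ν, B x⟫ = ⟪x, A x⟫ := by rw [← hB.inner_left_eq_inner_right, ← hν, hAx]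
    have h₂ : ⟪x, B ν⟫ = ⟪x, A x⟫ := by rw [hν]
    simp only [map_sub, inner_sub_left, inner_sub_right, sub_apply, h₁, h₂, ← hq,
      hB.inner_left_eq_inner_right, hAx]
    ring
  have := hB.re_inner_nonneg_right (x - ν)
  rwa [hexpand] at this

theorem apply_eq_of_apply_eq (h : OpPrec A B) (hA : A.IsPositive) (hB : B.IsPositive)
    {ξ η : Λ} (hη : B η = A ξ) : A η = A ξ := by
  have hexpand : ⟪η - ξ, A (η - ξ)⟫ = ⟪η, A η⟫ - ⟪η, B η⟫ := by
    have h₁ : ⟪η, A ξ⟫ = ⟪η, B η⟫ := by rw [hη]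
    have h₂ : ⟪ξ, A η⟫ = ⟪η, B η⟫ := by
      rw [← hA.inner_left_eq_inner_right, ← hη, hB.inner_left_eq_inner_right]
    simp only [map_sub, inner_sub_left, inner_sub_right, h₁, h₂,
      h.inner_apply_self_eq hB.isSymmetric hη]
    ring
  have hle : RCLike.re ⟪η, A η⟫ ≤ RCLike.re ⟪η, B η⟫ := by
    have := (h.le hA.isSymmetric hB).re_inner_nonneg_right η
    rwa [sub_apply, inner_sub_right, map_sub, sub_nonneg] at this
  have hzero : RCLike.re ⟪η - ξ, A (η - ξ)⟫ = 0 := by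
    refine le_antisymm ?_ (hA.re_inner_nonneg_right _)
    rw [hexpand, map_sub]
    linarith
  rw [← sub_eq_zero, ← map_sub]
  exact hA.apply_eq_zero_of_re_inner_eq_zero hzero

end OpPrec

theorem stmt2_general {Λ : Type*} [NormedAddCommGroup Λ] [InnerProductSpace ℂ Λ]
    (A B : Λ →L[ℂ] Λ) (hA : A.IsPositive) (hB : B.IsPositive)
    (h : OpPrec A B) :
    (∀ ξ ξ' η η' : Λ, η ∈ Set.range B → η' ∈ Set.range B → B η = A ξ → B η' = A ξ' →
        ⟪ξ, A ξ'⟫ = ⟪η, B η'⟫) ∧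
      ∀ ξ ∈ Set.range A, ∀ η ∈ Set.range B, B η = A ξ → A η = A ξ := by
  refine ⟨fun ξ ξ' η η' _ _ hη hη' => ?_, fun ξ _ η _ hη => h.apply_eq_of_apply_eq hA hB hη⟩
  calc ⟪ξ, A ξ'⟫ = ⟪A η, ξ'⟫ := by
        rw [h.apply_eq_of_apply_eq hA hB hη, hA.inner_left_eq_inner_right]
    _ = ⟪η, B η'⟫ := by rw [hA.inner_left_eq_inner_right, hη']

/-- If A ⪯ B (positive, closed range), then for all ξ, ξ', with η_ξ := B⁻¹Aξ
(encoded as any η in ran B with Bη = Aξ) one has (Aξ',ξ) = (Bη_{ξ'}, η_ξ); in particular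
A B⁻¹ A = A on ran A. -/
theorem stmt2 {Λ : Type*} [NormedAddCommGroup Λ] [InnerProductSpace ℂ Λ] [CompleteSpace Λ]
    (A B : Λ →L[ℂ] Λ) (hA : A.IsPositive) (hB : B.IsPositive)
    (hrA : IsClosed (Set.range A)) (hrB : IsClosed (Set.range B))
    (h : OpPrec A B) :
    (∀ ξ ξ' η η' : Λ, η ∈ Set.range B → η' ∈ Set.range B → B η = A ξ → B η' = A ξ' →
        ⟪ξ, A ξ'⟫ = ⟪η, B η'⟫) ∧
      ∀ ξ ∈ Set.range A, ∀ η ∈ Set.range B, B η = A ξ → A η = A ξ :=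
  stmt2_general A B hA hB h
end
end

section
/- Let W be a Hilbert space and Φ: X → 𝓛(Λ, W) a feature map, and define K(x,y) := Φ(y)* Φ(x). Then K is an 𝓛(Λ)-valued reproducing kernel on X, its RKHS is H_K = {Φ(·)* u : u ∈ W}, and the inner product satisfies (Φ(·)*u, Φ(·)*v)_{H_K} = (P_Φ u, P_Φ v)_W, where P_Φ is the orthogonal projection of W onto the closed linear span W_Φ of {Φ(x)ξ : x ∈ X, ξ ∈ Λ}. -/
open MeasureTheory ContinuousLinearMap
open scoped ComplexOrder

noncomputable section

local notation "⟪" x ", " y "⟫" => @inner ℂ _ _ x y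

/-! The kernel sections `K(x,·)ξ` of `H_K` have the same Gram matrix as the feature vectors
`Φ(x)ξ` of `W`, and they span a dense subspace of `H_K`; so `K(x,·)ξ ↦ Φ(x)ξ` extends to a
unitary `U : H_K ≃ W_Φ`. Through `U` the reproducing property reads `f = Φ(·)*(U f)`. Since
`Φ(·)*u` only depends on `P_Φ u`, this identifies `H_K` with `{Φ(·)*u : u ∈ W}`, the element
representing `Φ(·)*u` being `U⁻¹(P_Φ u)`, and the inner product formula is unitarity of `U`. -/

section GramIsometry

variable {𝕜 ι E F : Type*} [RCLike 𝕜] [NormedAddCommGroup E] [InnerProductSpace 𝕜 E]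
  [NormedAddCommGroup F] [InnerProductSpace 𝕜 F]

theorem norm_linearCombination_eq_of_inner_eq {a : ι → E} {b : ι → F}
    (hab : ∀ i j, inner 𝕜 (a i) (a j) = inner 𝕜 (b i) (b j)) (c : ι →₀ 𝕜) :
    ‖Finsupp.linearCombination 𝕜 b c‖ = ‖Finsupp.linearCombination 𝕜 a c‖ := by
  simp only [@norm_eq_sqrt_re_inner 𝕜, Finsupp.linearCombination_apply, Finsupp.sum, sum_inner,
    inner_sum, inner_smul_left, inner_smul_right, hab]

theorem exists_linearIsometryEquiv_of_inner_eq [CompleteSpace E] [CompleteSpace F]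
    {a : ι → E} {b : ι → F} (ha : Dense (Submodule.span 𝕜 (Set.range a) : Set E))
    (hab : ∀ i j, inner 𝕜 (a i) (a j) = inner 𝕜 (b i) (b j)) :
    ∃ U : E ≃ₗᵢ[𝕜] (Submodule.span 𝕜 (Set.range b)).topologicalClosure,
      ∀ i, (U (a i) : F) = b i := by
  set Wb := (Submodule.span 𝕜 (Set.range b)).topologicalClosure
  let ea := Finsupp.linearCombination 𝕜 a
  let eb : (ι →₀ 𝕜) →ₗ[𝕜] Wb := (Finsupp.linearCombination 𝕜 b).codRestrict Wb fun c =>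
    Submodule.le_topologicalClosure _ (by
      rw [← Finsupp.range_linearCombination]; exact LinearMap.mem_range_self _ c)
  have hea : DenseRange ea := by
    rwa [DenseRange, ← LinearMap.coe_range, Finsupp.range_linearCombination]
  have heb : DenseRange eb := by
    rw [DenseRange, Subtype.dense_iff, ← Set.range_comp]
    change (Wb : Set F) ⊆ closure (Set.range (Finsupp.linearCombination 𝕜 b))
    rw [← LinearMap.coe_range, Finsupp.range_linearCombination, ← Submodule.topologicalClosure_coe]
  have hnorm := norm_linearCombination_eq_of_inner_eq hab
  refine ⟨(LinearEquiv.refl 𝕜 _).extendOfIsometry ea eb hea heb hnorm, fun i => ?_⟩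
  have := (LinearEquiv.refl 𝕜 _).extendOfIsometry_eq ea eb hea heb hnorm (Finsupp.single i 1)
  simpa [ea, eb] using congrArg Subtype.val this

end GramIsometry

section FeatureMap

variable {X Λ W : Type*} [NormedAddCommGroup Λ] [InnerProductSpace ℂ Λ]
  [NormedAddCommGroup W] [InnerProductSpace ℂ W]

def featureSpace (Φ : X → Λ →L[ℂ] W) : Submodule ℂ W :=
  (Submodule.span ℂ (Set.range fun p : X × Λ => Φ p.1 p.2)).topologicalClosure

instance [CompleteSpace W] (Φ : X → Λ →L[ℂ] W) : CompleteSpace (featureSpace Φ) :=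
  Submodule.topologicalClosure.completeSpace _

theorem isOpKernel_adjoint_comp [CompleteSpace Λ] [CompleteSpace W] (Φ : X → Λ →L[ℂ] W) :
    IsOpKernel fun x y => adjoint (Φ y) ∘L Φ x := by
  refine ⟨fun x y => by rw [adjoint_comp, adjoint_adjoint], fun n x ξ => ?_⟩
  have hsum : ∑ j, ∑ k, ⟪ξ k, (adjoint (Φ (x k)) ∘L Φ (x j)) (ξ j)⟫
      = ⟪∑ k, Φ (x k) (ξ k), ∑ j, Φ (x j) (ξ j)⟫ := by
    simp only [comp_apply, adjoint_inner_right, inner_sum, sum_inner]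
  rw [hsum, ← inner_self_ofReal_re]
  exact RCLike.ofReal_nonneg.2 inner_self_nonneg

theorem adjoint_apply_eq_of_sub_mem_orthogonal [CompleteSpace Λ] [CompleteSpace W]
    {Φ : X → Λ →L[ℂ] W} {u u' : W}
    (h : u - u' ∈ (featureSpace Φ)ᗮ) (x : X) : adjoint (Φ x) u = adjoint (Φ x) u' := by
  refine ext_inner_left ℂ fun ξ => ?_
  have hΦ : Φ x ξ ∈ featureSpace Φ :=
    Submodule.le_topologicalClosure _ (Submodule.subset_span (Set.mem_range_self (x, ξ)))
  rw [adjoint_inner_right, adjoint_inner_right, ← sub_eq_zero, ← inner_sub_right]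
  exact Submodule.inner_right_of_mem_orthogonal hΦ h

namespace IsVRKHS

variable {H : Type*} [NormedAddCommGroup H] [InnerProductSpace ℂ H]
  {K : X → X → Λ →L[ℂ] Λ} {J : H →ₗ[ℂ] (X → Λ)} {kf : X → Λ → H}

theorem dense_span_range [CompleteSpace H] (hH : IsVRKHS K H J kf) :
    Dense (Submodule.span ℂ (Set.range fun p : X × Λ => kf p.1 p.2) : Set H) := by
  rw [Submodule.dense_iff_topologicalClosure_eq_top, Submodule.topologicalClosure_eq_top_iff,
    Submodule.eq_bot_iff]
  intro f hf
  refine hH.inj (funext fun x => ext_inner_left ℂ fun ξ => ?_)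
  rw [← hH.repro, map_zero, Pi.zero_apply, inner_zero_right]
  exact Submodule.inner_right_of_mem_orthogonal
    (Submodule.subset_span (Set.mem_range_self (x, ξ))) hf

theorem inner_kf_kf [CompleteSpace Λ] [CompleteSpace W] {Φ : X → Λ →L[ℂ] W}
    (hK : ∀ x y, K x y = adjoint (Φ y) ∘L Φ x)
    (hH : IsVRKHS K H J kf) (x y : X) (ξ η : Λ) : ⟪kf x ξ, kf y η⟫ = ⟪Φ x ξ, Φ y η⟫ := by
  simp only [hH.repro, hH.kfun_eq, hK, comp_apply, adjoint_inner_right]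

theorem exists_linearIsometryEquiv_featureSpace [CompleteSpace Λ] [CompleteSpace W]
    [CompleteSpace H] {Φ : X → Λ →L[ℂ] W}
    (hK : ∀ x y, K x y = adjoint (Φ y) ∘L Φ x) (hH : IsVRKHS K H J kf) :
    ∃ U : H ≃ₗᵢ[ℂ] featureSpace Φ, ∀ f x, J f x = adjoint (Φ x) (U f) := by
  obtain ⟨U, hU⟩ := exists_linearIsometryEquiv_of_inner_eq (b := fun p : X × Λ => Φ p.1 p.2)
    hH.dense_span_range fun p q => hH.inner_kf_kf hK p.1 q.1 p.2 q.2
  refine ⟨U, fun f x => ext_inner_left ℂ fun ξ => ?_⟩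
  calc ⟪ξ, J f x⟫ = ⟪kf x ξ, f⟫ := (hH.repro f x ξ).symm
    _ = ⟪(U (kf x ξ) : W), U f⟫ := by rw [← Submodule.coe_inner, U.inner_map_map]
    _ = ⟪ξ, adjoint (Φ x) (U f)⟫ := by rw [hU (x, ξ), adjoint_inner_right]

end IsVRKHS

end FeatureMap

/-- For a feature map Φ : X → 𝓛(Λ,W), K(x,y) := Φ(y)*Φ(x) is an operator-valued
reproducing kernel, its RKHS is exactly {Φ(·)*u : u ∈ W}, and
(Φ(·)*u, Φ(·)*v)_{H_K} = (P_Φ u, P_Φ v)_W, where P_Φ is the orthogonal projection onto the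
closed span W_Φ of {Φ(x)ξ} (the projections P_Φ u, P_Φ v being characterized as the elements
u', v' of W_Φ with u − u', v − v' orthogonal to W_Φ). -/
theorem stmt6 {X Λ W : Type*} [NormedAddCommGroup Λ] [InnerProductSpace ℂ Λ] [CompleteSpace Λ]
    [NormedAddCommGroup W] [InnerProductSpace ℂ W] [CompleteSpace W]
    (Φ : X → Λ →L[ℂ] W) (K : X → X → Λ →L[ℂ] Λ)
    (hKdef : ∀ x y, K x y = ContinuousLinearMap.adjoint (Φ y) ∘L Φ x)
    {H : Type*} [NormedAddCommGroup H] [InnerProductSpace ℂ H] [CompleteSpace H]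
    (J : H →ₗ[ℂ] (X → Λ)) (kf : X → Λ → H) (hH : IsVRKHS K H J kf) :
    IsOpKernel K ∧
      Set.range ⇑J = {F | ∃ u : W, F = fun x => ContinuousLinearMap.adjoint (Φ x) u} ∧
      ∀ (u v : W) (g h : H),
        (J g = fun x => ContinuousLinearMap.adjoint (Φ x) u) →
        (J h = fun x => ContinuousLinearMap.adjoint (Φ x) v) →
        ∀ u' v' : W,
          u' ∈ (Submodule.span ℂ (Set.range fun p : X × Λ => Φ p.1 p.2)).topologicalClosure →
          v' ∈ (Submodule.span ℂ (Set.range fun p : X × Λ => Φ p.1 p.2)).topologicalClosure →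
          (∀ w ∈ (Submodule.span ℂ (Set.range fun p : X × Λ => Φ p.1 p.2)).topologicalClosure,
            ⟪u - u', w⟫ = 0) →
          (∀ w ∈ (Submodule.span ℂ (Set.range fun p : X × Λ => Φ p.1 p.2)).topologicalClosure,
            ⟪v - v', w⟫ = 0) →
          ⟪g, h⟫ = ⟪u', v'⟫ := by
  obtain ⟨U, hJU⟩ := hH.exists_linearIsometryEquiv_featureSpace hKdef
  have hJ_proj : ∀ (u : W) (p : featureSpace Φ), u - p ∈ (featureSpace Φ)ᗮ →
      J (U.symm p) = fun x => adjoint (Φ x) u := fun u p hp => funext fun x => by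
    rw [hJU, U.apply_symm_apply, adjoint_apply_eq_of_sub_mem_orthogonal hp]
  refine ⟨funext₂ hKdef ▸ isOpKernel_adjoint_comp Φ, ?_, ?_⟩
  · ext F
    constructor
    · rintro ⟨f, rfl⟩
      exact ⟨U f, funext (hJU f)⟩
    · rintro ⟨u, rfl⟩
      exact ⟨_, hJ_proj u _ ((featureSpace Φ).sub_starProjection_mem_orthogonal u)⟩
  · intro u v g h hg hh u' v' hu' hv' hu hv
    have hg' : g = U.symm ⟨u', hu'⟩ :=
      hH.inj (hg.trans (hJ_proj u ⟨u', hu'⟩ ((Submodule.mem_orthogonal' _ _).2 hu)).symm)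
    have hh' : h = U.symm ⟨v', hv'⟩ :=
      hH.inj (hh.trans (hJ_proj v ⟨v', hv'⟩ ((Submodule.mem_orthogonal' _ _).2 hv)).symm)
    rw [hg', hh', U.symm.inner_map_map]
    rfl
end
end

section
/- A Λ-valued RKHS H_K is of finite dimension n if and only if there exist an n×n Hermitian strictly positive-definite matrix A and n linearly independent functions φ_j: X → Λ such that K(x,y)ξ = Σ_{j=1}^n Σ_{k=1}^n A_{jk} (ξ, φ_j(x))_Λ φ_k(y) for all x, y ∈ X and ξ ∈ Λ. In particular, if {φ_j} is an orthonormal basis of H_K then K(x,y)ξ = Σ_j (ξ, φ_j(x))_Λ φ_j(y). -/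
open MeasureTheory ContinuousLinearMap
open scoped ComplexOrder

noncomputable section

local notation "⟪" x ", " y "⟫" => @inner ℂ _ _ x y

/-!
If `H` has an orthonormal basis `(h_j)`, expanding `K(x,·)ξ` in it gives coefficients
`⟪h_j(x), ξ⟫`, which is the expansion with `A = 1`. Conversely, the expansion says that `K(x,·)ξ`
is the combination of the `φ_k` with coefficient vector `v A`, where `v = (⟪φ_j(x), ξ⟫)_j`.
The vectors `v` span `ℂⁿ` because the `φ_j` are independent, and `A` is invertible, so the span
of the kernel sections is mapped onto `span φ`. Being finite-dimensional with zero orthogonal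
complement, that span is all of `H`, hence `H ≃ span φ` has dimension `n`.
-/

open Submodule Set

section InnerCoordinates

variable {X Λ : Type*} [NormedAddCommGroup Λ] [InnerProductSpace ℂ Λ]

/-- If a functional `f` kills every `(⟪φ j x, ξ⟫)_j`, then `c j := conj (f eⱼ)` makes
`∑ j, c j • φ j` pointwise orthogonal to all of `Λ`, so `c = 0`. -/
theorem span_range_inner_eq_top {ι : Type*} [Fintype ι] [DecidableEq ι] {φ : ι → X → Λ}
    (hφ : LinearIndependent ℂ φ) :
    span ℂ (range fun p : X × Λ => fun j => ⟪φ j p.1, p.2⟫) = ⊤ := by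
  rw [← dualAnnihilator_eq_bot_iff, eq_bot_iff]
  intro f hf
  rw [mem_dualAnnihilator] at hf
  set c : ι → ℂ := fun j => starRingEnd ℂ (f (Pi.single j 1))
  have hc : ∑ j, c j • φ j = 0 := by
    ext x
    have hinner : ∀ ξ, ⟪∑ j, c j • φ j x, ξ⟫ = 0 := fun ξ => by
      rw [← hf _ (subset_span ⟨(x, ξ), rfl⟩), LinearMap.pi_apply_eq_sum_univ, sum_inner]
      refine Finset.sum_congr rfl fun j _ => ?_
      have hsingle : (fun j' => if j = j' then (1 : ℂ) else 0) = Pi.single j 1 := by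
        ext j'
        simp [Pi.single_apply, eq_comm]
      simp [c, hsingle, inner_smul_left, mul_comm]
    simpa using inner_self_eq_zero.mp (hinner _)
  refine (Pi.basisFun ℂ ι).ext fun j => ?_
  simpa [c] using Fintype.linearIndependent_iff.mp hφ c hc j

end InnerCoordinates

namespace IsVRKHS

variable {X Λ H : Type*} [NormedAddCommGroup Λ] [InnerProductSpace ℂ Λ]
  [NormedAddCommGroup H] [InnerProductSpace ℂ H]
  {K : X → X → Λ →L[ℂ] Λ} {J : H →ₗ[ℂ] (X → Λ)} {kf : X → Λ → H}

theorem eq_zero_of_forall_inner_eq_zero (hH : IsVRKHS K H J kf) {f : H}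
    (hf : ∀ x ξ, ⟪kf x ξ, f⟫ = 0) : f = 0 := by
  refine hH.inj (funext fun x => ?_)
  have := hf x (J f x)
  rw [hH.repro] at this
  simpa using inner_self_eq_zero.mp this

/-- A finite-dimensional subspace has an orthogonal projection, hence is its own double
orthogonal complement, even in an incomplete `H`. -/
theorem span_range_eq_top_of_finiteDimensional (hH : IsVRKHS K H J kf)
    [FiniteDimensional ℂ (span ℂ (range (Function.uncurry kf)))] :
    span ℂ (range (Function.uncurry kf)) = ⊤ := by
  set S := span ℂ (range (Function.uncurry kf))
  have hS : Sᗮ = ⊥ := (Submodule.eq_bot_iff _).mpr fun f hf => hH.eq_zero_of_forall_inner_eq_zero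
    fun x ξ => inner_right_of_mem_orthogonal (subset_span (mem_range_self (x, ξ))) hf
  rw [← S.orthogonal_orthogonal, hS, bot_orthogonal_eq_top]

theorem apply_eq_sum_orthonormalBasis (hH : IsVRKHS K H J kf) {ι : Type*} [Fintype ι]
    (b : OrthonormalBasis ι ℂ H) (x y : X) (ξ : Λ) :
    K x y ξ = ∑ j, ⟪J (b j) x, ξ⟫ • J (b j) y := by
  have hcoef : ∀ j, ⟪b j, kf x ξ⟫ = ⟪J (b j) x, ξ⟫ := fun j => by
    rw [← inner_conj_symm, hH.repro, inner_conj_symm]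
  calc K x y ξ = J (kf x ξ) y := by rw [hH.kfun_eq]
    _ = J (∑ j, ⟪b j, kf x ξ⟫ • b j) y := by rw [b.sum_repr']
    _ = ∑ j, ⟪J (b j) x, ξ⟫ • J (b j) y := by simp [hcoef]

section MatrixKernel

variable {ι : Type*} [Fintype ι] {A : Matrix ι ι ℂ} {φ : ι → X → Λ}

theorem apply_kf_eq_linearCombination (hH : IsVRKHS K H J kf)
    (hK : ∀ x y ξ, K x y ξ = ∑ j, ∑ k, (A j k * ⟪φ j x, ξ⟫) • φ k y) (x : X) (ξ : Λ) :
    J (kf x ξ) = Fintype.linearCombination ℂ φ (Matrix.vecMul (fun j => ⟪φ j x, ξ⟫) A) := by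
  rw [hH.kfun_eq]
  ext y
  simp only [hK, Fintype.linearCombination_apply, Matrix.vecMul, dotProduct,
    Finset.sum_apply, Pi.smul_apply, Finset.sum_smul]
  rw [Finset.sum_comm]
  simp only [mul_comm]

theorem range_eq_span_of_kernel_eq_sum [DecidableEq ι] (hH : IsVRKHS K H J kf) (hA : IsUnit A)
    (hφ : LinearIndependent ℂ φ)
    (hK : ∀ x y ξ, K x y ξ = ∑ j, ∑ k, (A j k * ⟪φ j x, ξ⟫) • φ k y) :
    LinearMap.range J = span ℂ (range φ) := by
  set S := span ℂ (range (Function.uncurry kf))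
  have hmap : S.map J = span ℂ (range φ) := by
    have hcomp : J ∘ Function.uncurry kf = (Fintype.linearCombination ℂ φ ∘ₗ A.vecMulLinear) ∘
        fun p : X × Λ => fun j => ⟪φ j p.1, p.2⟫ :=
      funext fun p => hH.apply_kf_eq_linearCombination hK p.1 p.2
    rw [map_span, ← range_comp, hcomp, range_comp, ← map_span, span_range_inner_eq_top hφ,
      Submodule.map_top, LinearMap.range_comp_of_range_eq_top _ (LinearMap.range_eq_top.mpr
        (Matrix.vecMul_surjective_iff_isUnit.mpr hA)), Fintype.range_linearCombination]
  have : FiniteDimensional ℂ (S.map J) := by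
    rw [hmap]; exact FiniteDimensional.span_of_finite ℂ (finite_range φ)
  have : FiniteDimensional ℂ S := (equivMapOfInjective J hH.inj S).symm.finiteDimensional
  rw [← Submodule.map_top, ← hH.span_range_eq_top_of_finiteDimensional, hmap]

theorem finrank_eq_card_of_kernel_eq_sum [DecidableEq ι] (hH : IsVRKHS K H J kf) (hA : IsUnit A)
    (hφ : LinearIndependent ℂ φ)
    (hK : ∀ x y ξ, K x y ξ = ∑ j, ∑ k, (A j k * ⟪φ j x, ξ⟫) • φ k y) :
    FiniteDimensional ℂ H ∧ Module.finrank ℂ H = Fintype.card ι := by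
  have e : H ≃ₗ[ℂ] span ℂ (range φ) :=
    (LinearEquiv.ofInjective J hH.inj).trans
      (LinearEquiv.ofEq _ _ (hH.range_eq_span_of_kernel_eq_sum hA hφ hK))
  have : FiniteDimensional ℂ (span ℂ (range φ)) :=
    FiniteDimensional.span_of_finite ℂ (finite_range φ)
  exact ⟨e.symm.finiteDimensional, e.finrank_eq.trans (finrank_span_eq_card hφ)⟩

end MatrixKernel

end IsVRKHS

theorem stmt8_general {X Λ : Type*} [NormedAddCommGroup Λ] [InnerProductSpace ℂ Λ]
    (K : X → X → Λ →L[ℂ] Λ)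
    {H : Type*} [NormedAddCommGroup H] [InnerProductSpace ℂ H]
    (J : H →ₗ[ℂ] (X → Λ)) (kf : X → Λ → H) (hH : IsVRKHS K H J kf) (n : ℕ) :
    ((FiniteDimensional ℂ H ∧ Module.finrank ℂ H = n) ↔
        ∃ (A : Matrix (Fin n) (Fin n) ℂ) (φ : Fin n → X → Λ),
          A.IsHermitian ∧ A.PosDef ∧ LinearIndependent ℂ φ ∧
            ∀ (x y : X) (ξ : Λ), K x y ξ = ∑ j, ∑ k, (A j k * ⟪φ j x, ξ⟫) • φ k y) ∧
      ∀ h : Fin n → H, Orthonormal ℂ h →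
        Submodule.span ℂ (Set.range h) = (⊤ : Submodule ℂ H) →
        ∀ (x y : X) (ξ : Λ), K x y ξ = ∑ j, ⟪J (h j) x, ξ⟫ • J (h j) y := by
  refine ⟨⟨fun ⟨_, hrank⟩ => ?_, fun ⟨A, φ, _, hA, hφ, hK⟩ => ?_⟩, fun h hon hsp => ?_⟩
  · let b := (stdOrthonormalBasis ℂ H).reindex (finCongr hrank)
    refine ⟨1, fun j => J (b j), Matrix.isHermitian_one, Matrix.PosDef.one,
      b.orthonormal.linearIndependent.map' J (LinearMap.ker_eq_bot.mpr hH.inj), fun x y ξ => ?_⟩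
    simp [hH.apply_eq_sum_orthonormalBasis b, Matrix.one_apply]
  · simpa using hH.finrank_eq_card_of_kernel_eq_sum hA.isUnit hφ hK
  · simpa using hH.apply_eq_sum_orthonormalBasis (OrthonormalBasis.mk hon hsp.ge)

/-- H_K has finite dimension n iff K(x,y)ξ = Σ_{j,k} A_{jk} (ξ,φ_j(x)) φ_k(y) for a
Hermitian strictly positive-definite n×n matrix A and linearly independent functions φ_j;
and if the φ_j form an orthonormal basis of H_K then K(x,y)ξ = Σ_j (ξ,φ_j(x)) φ_j(y). -/
theorem stmt8 {X Λ : Type*} [NormedAddCommGroup Λ] [InnerProductSpace ℂ Λ] [CompleteSpace Λ]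
    (K : X → X → Λ →L[ℂ] Λ) (hK : IsOpKernel K)
    {H : Type*} [NormedAddCommGroup H] [InnerProductSpace ℂ H] [CompleteSpace H]
    (J : H →ₗ[ℂ] (X → Λ)) (kf : X → Λ → H) (hH : IsVRKHS K H J kf) (n : ℕ) :
    ((FiniteDimensional ℂ H ∧ Module.finrank ℂ H = n) ↔
        ∃ (A : Matrix (Fin n) (Fin n) ℂ) (φ : Fin n → X → Λ),
          A.IsHermitian ∧ A.PosDef ∧ LinearIndependent ℂ φ ∧
            ∀ (x y : X) (ξ : Λ), K x y ξ = ∑ j, ∑ k, (A j k * ⟪φ j x, ξ⟫) • φ k y) ∧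
      ∀ h : Fin n → H, Orthonormal ℂ h →
        Submodule.span ℂ (Set.range h) = (⊤ : Submodule ℂ H) →
        ∀ (x y : X) (ξ : Λ), K x y ξ = ∑ j, ⟪J (h j) x, ξ⟫ • J (h j) y :=
  stmt8_general K J kf hH n
end
end

section
/- Let φ_j: X → Λ, j = 1,…,m, be linearly independent, n ≤ m, and A (n×n), B (m×m) Hermitian strictly positive-definite matrices. Define K(x,y)ξ := Σ_{j,k≤n} A_{jk}(ξ, φ_j(x))_Λ φ_k(y) and G(x,y)ξ := Σ_{j,k≤m} B_{jk}(ξ, φ_j(x))_Λ φ_k(y). Then H_K ⪯ H_G if and only if B⁻¹ restricted to the first n indices coincides with A⁻¹, i.e., (B⁻¹)_{jk} = (A⁻¹)_{jk} for all j, k ∈ {1,…,n}. If so, G ≠ K if and only if m > n. -/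
open MeasureTheory ContinuousLinearMap
open scoped ComplexOrder

noncomputable section

local notation "⟪" x ", " y "⟫" => @inner ℂ _ _ x y

/-!
Let `ψ` be linearly independent and `M` invertible. In an RKHS `H` of the kernel
`Q(x,y)ξ = ∑ M_jk (ξ, ψ_j(x)) ψ_k(y)` every `ψ_k` lifts to some `e_k ∈ H`, because the vectors
`((ψ_j(x), ξ))_j` span `ℂ^p`. The `e_k` span `H`: their span is finite-dimensional, hence closed,
and contains every section `Q(x,·)ξ`, which are total by the reproducing property. That property,
tested on the same spanning vectors, also gives `M Γ = 1` for `Γ_kl = ⟪e_l, e_k⟫`, so the Gram matrix of `e` is the transpose of `M⁻¹`.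

Since witnesses of `H_K ⪯ H_G` are unique, they form a linear isometry; hence `H_K ⪯ H_G` says
exactly that the Gram matrix of the lifts in `H_K` (from `A⁻¹`) is that of the first `n` lifts in
`H_G` (from `B⁻¹`). If `n = m` this forces `A = B`, i.e. `K = G`; if `n < m` and `G = K`, then
`H_K` is an RKHS of both kernels, so its range is spanned both by `n` and by `m` independent
functions.
-/

section

variable {X Λ : Type*} [NormedAddCommGroup Λ] [InnerProductSpace ℂ Λ]

def pairing {ι : Type*} (ψ : ι → X → Λ) (x : X) (ξ : Λ) : ι → ℂ := fun j => ⟪ψ j x, ξ⟫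

theorem LinearIndependent.eq_zero_of_sum_mul_inner_eq_zero {ι : Type*} [Fintype ι]
    {ψ : ι → X → Λ} (hψ : LinearIndependent ℂ ψ) {t : ι → ℂ}
    (h : ∀ x ξ, ∑ j, t j * ⟪ψ j x, ξ⟫ = 0) : t = 0 := by
  have hsum : ∑ j, starRingEnd ℂ (t j) • ψ j = 0 := by
    funext x
    have hx : ∀ ξ, ⟪(∑ j, starRingEnd ℂ (t j) • ψ j) x, ξ⟫ = 0 := fun ξ => by
      simpa [sum_inner, inner_smul_left, mul_comm] using h x ξ
    exact inner_self_eq_zero.mp (hx _)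
  funext j
  simpa using Fintype.linearIndependent_iff.mp hψ _ hsum j

theorem LinearIndependent.span_range_pairing_eq_top {ι : Type*} [Fintype ι] [DecidableEq ι]
    {ψ : ι → X → Λ} (hψ : LinearIndependent ℂ ψ) :
    Submodule.span ℂ (Set.range fun q : X × Λ => pairing ψ q.1 q.2) = ⊤ := by
  rw [← Submodule.dualAnnihilator_eq_bot_iff, Submodule.eq_bot_iff]
  intro f hf
  have ht := hψ.eq_zero_of_sum_mul_inner_eq_zero
    (t := fun i => f fun j => if i = j then 1 else 0) fun x ξ => by
      have := (Submodule.mem_dualAnnihilator f).mp hf _ (Submodule.subset_span ⟨(x, ξ), rfl⟩)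
      rw [f.pi_apply_eq_sum_univ] at this
      simpa [pairing, mul_comm] using this
  refine LinearMap.ext fun v => ?_
  have ht' : ∀ i, f (fun j => if i = j then 1 else 0) = 0 := congrFun ht
  simp [f.pi_apply_eq_sum_univ v, ht']

end

namespace IsVRKHS

open Matrix

variable {X Λ : Type*} [NormedAddCommGroup Λ] [InnerProductSpace ℂ Λ]
  {Q : X → X → Λ →L[ℂ] Λ} {H : Type*} [NormedAddCommGroup H] [InnerProductSpace ℂ H]
  {J : H →ₗ[ℂ] (X → Λ)} {kf : X → Λ → H}

theorem inner_kernelSection (hH : IsVRKHS Q H J kf) (f : H) (x : X) (ξ : Λ) :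
    ⟪f, kf x ξ⟫ = ⟪J f x, ξ⟫ := by
  rw [← inner_conj_symm, hH.repro, inner_conj_symm]

theorem eq_top_of_kernelSection_mem (hH : IsVRKHS Q H J kf) (S : Submodule ℂ H)
    [S.HasOrthogonalProjection] (hS : ∀ x ξ, kf x ξ ∈ S) : S = ⊤ := by
  rw [← Submodule.orthogonal_eq_bot_iff, Submodule.eq_bot_iff]
  intro g hg
  refine hH.inj (funext fun x => ?_)
  have h := Submodule.inner_right_of_mem_orthogonal (hS x (J g x)) hg
  rw [hH.repro] at h
  simpa using inner_self_eq_zero.mp h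

variable {p : ℕ} {ψ : Fin p → X → Λ} {M : Matrix (Fin p) (Fin p) ℂ}

theorem apply_kernelSection
    (hQ : ∀ x y ξ, Q x y ξ = ∑ j, ∑ k, (M j k * ⟪ψ j x, ξ⟫) • ψ k y)
    (hH : IsVRKHS Q H J kf) (x : X) (ξ : Λ) :
    J (kf x ξ) = ∑ k, (pairing ψ x ξ ᵥ* M) k • ψ k := by
  rw [hH.kfun_eq]
  funext y
  simp only [hQ, Finset.sum_apply, Pi.smul_apply, Matrix.vecMul, dotProduct, pairing,
    Finset.sum_smul, mul_comm]
  exact Finset.sum_comm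

theorem span_range_le_range (hψ : LinearIndependent ℂ ψ) (hM : IsUnit M)
    (hQ : ∀ x y ξ, Q x y ξ = ∑ j, ∑ k, (M j k * ⟪ψ j x, ξ⟫) • ψ k y)
    (hH : IsVRKHS Q H J kf) :
    Submodule.span ℂ (Set.range ψ) ≤ LinearMap.range J := by
  have hL : LinearMap.range (Fintype.linearCombination ℂ ψ ∘ₗ M.vecMulLinear) =
      Submodule.span ℂ (Set.range ψ) := by
    rw [LinearMap.range_comp_of_range_eq_top _
      (LinearMap.range_eq_top.mpr (Matrix.vecMul_surjective_iff_isUnit.mpr hM)),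
      Fintype.range_linearCombination]
  rw [← hL, LinearMap.range_eq_map, ← hψ.span_range_pairing_eq_top, Submodule.map_span,
    Submodule.span_le]
  rintro _ ⟨_, ⟨q, rfl⟩, rfl⟩
  exact ⟨kf q.1 q.2, by
    rw [hH.apply_kernelSection hQ]
    simp [Fintype.linearCombination_apply]⟩

theorem kernelSection_eq_sum
    (hQ : ∀ x y ξ, Q x y ξ = ∑ j, ∑ k, (M j k * ⟪ψ j x, ξ⟫) • ψ k y)
    (hH : IsVRKHS Q H J kf) {e : Fin p → H} (he : ∀ k, J (e k) = ψ k) (x : X) (ξ : Λ) :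
    kf x ξ = ∑ k, (pairing ψ x ξ ᵥ* M) k • e k := by
  apply hH.inj
  simp only [hH.apply_kernelSection hQ, map_sum, map_smul, he]

theorem span_range_eq_top_of_apply_eq
    (hQ : ∀ x y ξ, Q x y ξ = ∑ j, ∑ k, (M j k * ⟪ψ j x, ξ⟫) • ψ k y)
    (hH : IsVRKHS Q H J kf) {e : Fin p → H} (he : ∀ k, J (e k) = ψ k) :
    Submodule.span ℂ (Set.range e) = ⊤ :=
  have : FiniteDimensional ℂ (Submodule.span ℂ (Set.range e)) :=
    FiniteDimensional.span_of_finite ℂ (Set.finite_range e)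
  hH.eq_top_of_kernelSection_mem _ fun x ξ =>
    (Submodule.mem_span_range_iff_exists_fun ℂ).mpr ⟨_, (hH.kernelSection_eq_sum hQ he x ξ).symm⟩

theorem inner_eq_inv_of_apply_eq (hψ : LinearIndependent ℂ ψ)
    (hQ : ∀ x y ξ, Q x y ξ = ∑ j, ∑ k, (M j k * ⟪ψ j x, ξ⟫) • ψ k y)
    (hH : IsVRKHS Q H J kf) {e : Fin p → H} (he : ∀ k, J (e k) = ψ k) (k l : Fin p) :
    ⟪e k, e l⟫ = M⁻¹ l k := by
  set Γ : Matrix (Fin p) (Fin p) ℂ := Matrix.of fun k l => ⟪e l, e k⟫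
  have hfix : ∀ q : X × Λ, (M * Γ).vecMulLinear (pairing ψ q.1 q.2) = pairing ψ q.1 q.2 := by
    rintro ⟨x, ξ⟩
    funext l
    have h := hH.inner_kernelSection (e l) x ξ
    simp only [he, hH.kernelSection_eq_sum hQ he, inner_sum, inner_smul_right] at h
    rw [vecMulLinear_apply, ← vecMul_vecMul]
    exact h
  have hMΓ : M * Γ = 1 := by
    have h := LinearMap.ext_on_range hψ.span_range_pairing_eq_top (g := LinearMap.id) hfix
    ext i j
    simpa [one_apply, Pi.single_apply, eq_comm] using
      congrFun (LinearMap.congr_fun h (Pi.single i 1)) j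
  rw [Matrix.inv_eq_right_inv hMΓ]
  rfl

theorem exists_spanning_lift_inner_eq_inv (hψ : LinearIndependent ℂ ψ) (hM : IsUnit M)
    (hQ : ∀ x y ξ, Q x y ξ = ∑ j, ∑ k, (M j k * ⟪ψ j x, ξ⟫) • ψ k y)
    (hH : IsVRKHS Q H J kf) :
    ∃ e : Fin p → H, (∀ k, J (e k) = ψ k) ∧ (∀ k l, ⟪e k, e l⟫ = M⁻¹ l k) ∧
      Submodule.span ℂ (Set.range e) = ⊤ := by
  choose e he using fun k => hH.span_range_le_range hψ hM hQ (Submodule.subset_span ⟨k, rfl⟩)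
  exact ⟨e, he, hH.inner_eq_inv_of_apply_eq hψ hQ he,
    hH.span_range_eq_top_of_apply_eq hQ he⟩

theorem range_eq_span (hψ : LinearIndependent ℂ ψ) (hM : IsUnit M)
    (hQ : ∀ x y ξ, Q x y ξ = ∑ j, ∑ k, (M j k * ⟪ψ j x, ξ⟫) • ψ k y)
    (hH : IsVRKHS Q H J kf) :
    LinearMap.range J = Submodule.span ℂ (Set.range ψ) := by
  obtain ⟨e, he, -, hspan⟩ := hH.exists_spanning_lift_inner_eq_inv hψ hM hQ
  rw [LinearMap.range_eq_map, ← hspan, Submodule.map_span, ← Set.range_comp]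
  exact congrArg _ (congrArg Set.range (funext he))

end IsVRKHS

section RKHSle

variable {H₁ H₂ V : Type*} [NormedAddCommGroup H₁] [InnerProductSpace ℂ H₁]
  [NormedAddCommGroup H₂] [InnerProductSpace ℂ H₂] [AddCommGroup V] [Module ℂ V]
  {J₁ : H₁ →ₗ[ℂ] V} {J₂ : H₂ →ₗ[ℂ] V}

theorem RKHSle.inner_eq (hle : RKHSle J₁ J₂) (hJ₂ : Function.Injective J₂) {f f' : H₁}
    {g g' : H₂} (hg : J₂ g = J₁ f) (hg' : J₂ g' = J₁ f') : ⟪g, g'⟫ = ⟪f, f'⟫ := by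
  choose T hT hTnorm using hle
  let T' : H₁ →ₗᵢ[ℂ] H₂ :=
    { toFun := T
      map_add' := fun a b => hJ₂ (by simp only [map_add, hT])
      map_smul' := fun c a => hJ₂ (by simp only [map_smul, hT, RingHom.id_apply])
      norm_map' := hTnorm }
  have hTf : T' f = g := hJ₂ ((hT f).trans hg.symm)
  have hTf' : T' f' = g' := hJ₂ ((hT f').trans hg'.symm)
  rw [← hTf, ← hTf', T'.inner_map_map]

theorem rkhsle_iff_inner_eq {ι : Type*} [Fintype ι] {e : ι → H₁} {u : ι → H₂}
    (he : Submodule.span ℂ (Set.range e) = ⊤) (hJ₂ : Function.Injective J₂)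
    (hu : ∀ i, J₂ (u i) = J₁ (e i)) :
    RKHSle J₁ J₂ ↔ ∀ i j, ⟪u i, u j⟫ = ⟪e i, e j⟫ := by
  refine ⟨fun hle i j => hle.inner_eq hJ₂ (hu i) (hu j), fun h f => ?_⟩
  obtain ⟨c, rfl⟩ :=
    (Submodule.mem_span_range_iff_exists_fun ℂ).mp (he ▸ Submodule.mem_top (x := f))
  refine ⟨∑ i, c i • u i, by simp only [map_sum, map_smul, hu], ?_⟩
  rw [@norm_eq_sqrt_re_inner ℂ, @norm_eq_sqrt_re_inner ℂ]
  simp only [sum_inner, inner_sum, inner_smul_left, inner_smul_right, h]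

end RKHSle

theorem stmt9_general {X Λ : Type*} [NormedAddCommGroup Λ] [InnerProductSpace ℂ Λ]
    (n m : ℕ) (hnm : n ≤ m) (φ : Fin m → X → Λ) (hφ : LinearIndependent ℂ φ)
    (A : Matrix (Fin n) (Fin n) ℂ) (B : Matrix (Fin m) (Fin m) ℂ)
    (hApd : A.PosDef) (hBpd : B.PosDef)
    (K G : X → X → Λ →L[ℂ] Λ)
    (hKdef : ∀ (x y : X) (ξ : Λ),
      K x y ξ = ∑ j, ∑ k, (A j k * ⟪φ (Fin.castLE hnm j) x, ξ⟫) • φ (Fin.castLE hnm k) y)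
    (hGdef : ∀ (x y : X) (ξ : Λ), G x y ξ = ∑ j, ∑ k, (B j k * ⟪φ j x, ξ⟫) • φ k y)
    {HK : Type*} [NormedAddCommGroup HK] [InnerProductSpace ℂ HK]
    (JK : HK →ₗ[ℂ] (X → Λ)) (kfK : X → Λ → HK) (hHK : IsVRKHS K HK JK kfK)
    {HG : Type*} [NormedAddCommGroup HG] [InnerProductSpace ℂ HG]
    (JG : HG →ₗ[ℂ] (X → Λ)) (kfG : X → Λ → HG) (hHG : IsVRKHS G HG JG kfG) :
    (RKHSle JK JG ↔
        ∀ j k : Fin n, B⁻¹ (Fin.castLE hnm j) (Fin.castLE hnm k) = A⁻¹ j k) ∧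
      (RKHSle JK JG → (G ≠ K ↔ n < m)) := by
  have hφn : LinearIndependent ℂ fun k => φ (Fin.castLE hnm k) :=
    hφ.comp _ (Fin.castLE_injective hnm)
  obtain ⟨e, heJ, heG, heS⟩ := hHK.exists_spanning_lift_inner_eq_inv hφn hApd.isUnit hKdef
  obtain ⟨f, hfJ, hfG, -⟩ := hHG.exists_spanning_lift_inner_eq_inv hφ hBpd.isUnit hGdef
  have hle_iff : RKHSle JK JG ↔
      ∀ j k : Fin n, B⁻¹ (Fin.castLE hnm j) (Fin.castLE hnm k) = A⁻¹ j k := by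
    rw [rkhsle_iff_inner_eq heS hHG.inj (u := fun k => f (Fin.castLE hnm k))
      fun k => (hfJ _).trans (heJ k).symm]
    simp only [heG, hfG]
    exact forall_comm
  refine ⟨hle_iff, fun hle => ⟨fun hGK => ?_, fun hlt hGK => ?_⟩⟩
  · by_contra hnm'
    obtain rfl : n = m := le_antisymm hnm (not_lt.mp hnm')
    have hBA : B = A := Matrix.inv_inj (funext₂ (hle_iff.mp hle))
      ((Matrix.isUnit_iff_isUnit_det B).mp hBpd.isUnit)
    refine hGK (funext₂ fun x y => ContinuousLinearMap.ext fun ξ => ?_)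
    rw [hGdef, hKdef, hBA]
    rfl
  · subst hGK
    have hrank := finrank_span_eq_card hφn
    rw [← hHK.range_eq_span hφn hApd.isUnit hKdef, hHK.range_eq_span hφ hBpd.isUnit hGdef,
      finrank_span_eq_card hφ, Fintype.card_fin, Fintype.card_fin] at hrank
    omega

/-- For kernels K, G built from Hermitian strictly positive-definite matrices A
(n×n), B (m×m) and linearly independent φ_1,…,φ_m, H_K ⪯ H_G iff B⁻¹ is an augmentation of
A⁻¹ ((B⁻¹)_{jk} = (A⁻¹)_{jk} for j,k ≤ n); in that case G ≠ K iff m > n. -/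
theorem stmt9 {X Λ : Type*} [NormedAddCommGroup Λ] [InnerProductSpace ℂ Λ] [CompleteSpace Λ]
    (n m : ℕ) (hnm : n ≤ m) (φ : Fin m → X → Λ) (hφ : LinearIndependent ℂ φ)
    (A : Matrix (Fin n) (Fin n) ℂ) (B : Matrix (Fin m) (Fin m) ℂ)
    (hA : A.IsHermitian) (hApd : A.PosDef) (hB : B.IsHermitian) (hBpd : B.PosDef)
    (K G : X → X → Λ →L[ℂ] Λ)
    (hKdef : ∀ (x y : X) (ξ : Λ),
      K x y ξ = ∑ j, ∑ k, (A j k * ⟪φ (Fin.castLE hnm j) x, ξ⟫) • φ (Fin.castLE hnm k) y)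
    (hGdef : ∀ (x y : X) (ξ : Λ), G x y ξ = ∑ j, ∑ k, (B j k * ⟪φ j x, ξ⟫) • φ k y)
    {HK : Type*} [NormedAddCommGroup HK] [InnerProductSpace ℂ HK] [CompleteSpace HK]
    (JK : HK →ₗ[ℂ] (X → Λ)) (kfK : X → Λ → HK) (hHK : IsVRKHS K HK JK kfK)
    {HG : Type*} [NormedAddCommGroup HG] [InnerProductSpace ℂ HG] [CompleteSpace HG]
    (JG : HG →ₗ[ℂ] (X → Λ)) (kfG : X → Λ → HG) (hHG : IsVRKHS G HG JG kfG) :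
    (RKHSle JK JG ↔
        ∀ j k : Fin n, B⁻¹ (Fin.castLE hnm j) (Fin.castLE hnm k) = A⁻¹ j k) ∧
      (RKHSle JK JG → (G ≠ K ↔ n < m)) :=
  stmt9_general n m hnm φ hφ A B hApd hBpd K G hKdef hGdef JK kfK hHK JG kfG hHG
end
end

section
/- Let K(x,y)ξ = Σ_{j=1}^n a_j (ξ, φ_j(x))_Λ φ_j(y) and G(x,y)ξ = Σ_{k=1}^m b_k (ξ, φ_k(x))_Λ φ_k(y), where n ≤ m, the a_j, b_k are positive constants, and φ_1,…,φ_m: X → Λ are linearly independent. Then H_K ⪯ H_G if and only if a_j = b_j for all j = 1,…,n. -/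
/-! For the kernel `K(x,y)ξ = ∑ₗ cₗ ⟪ψₗ x, ξ⟫ ψₗ y` with linearly independent `ψₗ` and nonzero
weights, every kernel section `K(x,·)ξ` lies in the span of the `ψₗ`, so the span of the kernel
sections is finite dimensional; by the reproducing property its orthogonal complement is trivial,
so it is the whole RKHS. Writing `f = ∑ₗ wₗ ψₗ`, the coefficient map `f ↦ w` is therefore a linear
isomorphism onto `ℂᴺ` (surjective because the coefficient vectors `(cₗ ⟪ψₗ x, ξ⟫)ₗ` of the kernel
sections span), and the reproducing property, checked on kernel sections, gives
`‖f‖² = ∑ₗ |wₗ|² / cₗ`. So `H_K ⪯ H_G` says that `∑ⱼ |wⱼ|² / aⱼ = ∑ⱼ |wⱼ|² / bⱼ` for all `w`, and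
testing on unit vectors gives `aⱼ = bⱼ`. -/

open MeasureTheory ContinuousLinearMap
open scoped ComplexOrder

noncomputable section

local notation "⟪" x ", " y "⟫" => @inner ℂ _ _ x y

theorem Fintype.sum_extend_zero {ι κ R M : Type*} [Fintype ι] [Fintype κ] [Zero R]
    [AddCommMonoid M] {e : ι → κ} (he : e.Injective) (w : ι → R) (F : κ → R → M)
    (hF : ∀ k, F k 0 = 0) :
    ∑ k, F k (Function.extend e w 0 k) = ∑ i, F (e i) (w i) :=
  (Fintype.sum_of_injective e he _ _
    (fun k hk => by rw [Function.extend_apply' _ _ _ (by simpa using hk), Pi.zero_apply, hF])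
    (fun i => by rw [he.extend_apply])).symm

namespace IsVRKHS

variable {X Λ H : Type*} [NormedAddCommGroup Λ] [InnerProductSpace ℂ Λ]
  [NormedAddCommGroup H] [InnerProductSpace ℂ H]
  {K : X → X → Λ →L[ℂ] Λ} {J : H →ₗ[ℂ] (X → Λ)} {kf : X → Λ → H}

theorem span_range_eq_top (h : IsVRKHS K H J kf)
    [FiniteDimensional ℂ (Submodule.span ℂ (Set.range (Function.uncurry kf)))] :
    Submodule.span ℂ (Set.range (Function.uncurry kf)) = ⊤ := by
  refine Submodule.orthogonal_eq_bot_iff.1 <| (Submodule.eq_bot_iff _).2 fun g hg => h.inj ?_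
  rw [map_zero]
  funext x
  refine inner_self_eq_zero (𝕜 := ℂ) |>.1 ?_
  rw [← h.repro]
  exact (Submodule.mem_orthogonal _ g).1 hg _ (Submodule.subset_span ⟨(x, J g x), rfl⟩)

theorem range_le_of_forall_mem (h : IsVRKHS K H J kf) (V : Submodule ℂ (X → Λ))
    [FiniteDimensional ℂ V] (hV : ∀ x ξ, (fun y => K x y ξ) ∈ V) :
    LinearMap.range J ≤ V := by
  set S := Submodule.span ℂ (Set.range (Function.uncurry kf))
  have hSV : S.map J ≤ V := by
    rw [Submodule.map_span_le]
    rintro _ ⟨⟨x, ξ⟩, rfl⟩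
    simpa [h.kfun_eq] using hV x ξ
  have : FiniteDimensional ℂ (S.map J) := Submodule.finiteDimensional_of_le hSV
  have : FiniteDimensional ℂ S := (Submodule.equivMapOfInjective J h.inj S).symm.finiteDimensional
  rwa [LinearMap.range_eq_map, ← h.span_range_eq_top]

section Diagonal

variable {N : ℕ} {ψ : Fin N → X → Λ} {c : Fin N → ℝ}

theorem exists_coord_of_diagonal (h : IsVRKHS K H J kf) (hψ : LinearIndependent ℂ ψ)
    (hK : ∀ x y ξ, K x y ξ = ∑ l, ((c l : ℂ) * ⟪ψ l x, ξ⟫) • ψ l y) :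
    ∃ Φ : H →ₗ[ℂ] (Fin N → ℂ), ∀ f, J f = ∑ l, Φ f l • ψ l := by
  set L := Fintype.linearCombination ℂ ψ
  have hJL : ∀ f, J f ∈ LinearMap.range L := fun f =>
    h.range_le_of_forall_mem _ (fun x ξ => LinearMap.mem_range.2 ⟨fun l => c l * ⟪ψ l x, ξ⟫, by
      funext y; simp [L, Fintype.linearCombination_apply, hK]⟩) ⟨f, rfl⟩
  refine ⟨(LinearEquiv.ofInjective L hψ.fintypeLinearCombination_injective).symm.toLinearMap ∘ₗ
    J.codRestrict _ hJL, fun f => ?_⟩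
  rw [← Fintype.linearCombination_apply ℂ ψ]
  simp [L]

variable {Φ : H →ₗ[ℂ] (Fin N → ℂ)}

theorem coord_injective (h : IsVRKHS K H J kf) (hΦ : ∀ f, J f = ∑ l, Φ f l • ψ l) :
    Function.Injective Φ :=
  fun f g hfg => h.inj (by rw [hΦ, hΦ, hfg])

theorem coord_kernel_section (h : IsVRKHS K H J kf) (hψ : LinearIndependent ℂ ψ)
    (hK : ∀ x y ξ, K x y ξ = ∑ l, ((c l : ℂ) * ⟪ψ l x, ξ⟫) • ψ l y)
    (hΦ : ∀ f, J f = ∑ l, Φ f l • ψ l) (x : X) (ξ : Λ) :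
    Φ (kf x ξ) = fun l => c l * ⟪ψ l x, ξ⟫ := by
  refine hψ.fintypeLinearCombination_injective ?_
  simp only [Fintype.linearCombination_apply, ← hΦ, h.kfun_eq]
  funext y
  simp [hK, Finset.sum_apply]

theorem inner_eq_sum_coord (h : IsVRKHS K H J kf) (hψ : LinearIndependent ℂ ψ)
    (hc : ∀ l, c l ≠ 0) (hK : ∀ x y ξ, K x y ξ = ∑ l, ((c l : ℂ) * ⟪ψ l x, ξ⟫) • ψ l y)
    (hΦ : ∀ f, J f = ∑ l, Φ f l • ψ l) (f g : H) :
    ⟪f, g⟫ = ∑ l, starRingEnd ℂ (Φ f l) * Φ g l / c l := by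
  have : FiniteDimensional ℂ H := Module.Finite.of_injective Φ (h.coord_injective hΦ)
  have hf : f ∈ Submodule.span ℂ (Set.range (Function.uncurry kf)) := by
    rw [h.span_range_eq_top]; trivial
  induction hf using Submodule.span_induction with
  | mem _ hp =>
    obtain ⟨⟨x, ξ⟩, rfl⟩ := hp
    rw [Function.uncurry_apply_pair, h.repro, hΦ g, h.coord_kernel_section hψ hK hΦ]
    simp only [Finset.sum_apply, Pi.smul_apply, inner_sum, inner_smul_right]
    refine Finset.sum_congr rfl fun l _ => ?_
    have : (c l : ℂ) ≠ 0 := by exact_mod_cast hc l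
    simp only [map_mul, Complex.conj_ofReal, inner_conj_symm]
    field_simp
  | zero => simp
  | add f₁ f₂ _ _ h₁ h₂ => simp [h₁, h₂, add_mul, add_div, Finset.sum_add_distrib]
  | smul a f _ hf =>
    rw [inner_smul_left, hf, Finset.mul_sum]
    simp only [map_smul, Pi.smul_apply, smul_eq_mul, map_mul]
    exact Finset.sum_congr rfl fun _ _ => by ring

theorem coord_surjective (h : IsVRKHS K H J kf) (hψ : LinearIndependent ℂ ψ)
    (hc : ∀ l, c l ≠ 0) (hK : ∀ x y ξ, K x y ξ = ∑ l, ((c l : ℂ) * ⟪ψ l x, ξ⟫) • ψ l y)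
    (hΦ : ∀ f, J f = ∑ l, Φ f l • ψ l) : Function.Surjective Φ := by
  rw [← LinearMap.range_eq_top]
  by_contra hne
  obtain ⟨μ, hμ, hμΦ⟩ :=
    Submodule.exists_dual_map_eq_bot_of_lt_top (lt_top_iff_ne_top.2 hne) inferInstance
  obtain ⟨u, hμu⟩ : ∃ u : Fin N → ℂ, ∀ w, μ w = ∑ l, w l * u l :=
    ⟨fun l => μ fun j => if l = j then 1 else 0, fun w => by
      rw [LinearMap.pi_apply_eq_sum_univ]; simp only [smul_eq_mul]⟩
  have hvanish : ∀ x ξ, ⟪∑ l, starRingEnd ℂ (c l * u l) • ψ l x, ξ⟫ = 0 := by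
    intro x ξ
    have := (Submodule.eq_bot_iff _).1 hμΦ _ ⟨Φ (kf x ξ), ⟨kf x ξ, rfl⟩, rfl⟩
    rw [hμu, h.coord_kernel_section hψ hK hΦ] at this
    rw [← this, sum_inner]
    refine Finset.sum_congr rfl fun l _ => ?_
    rw [inner_smul_left, Complex.conj_conj]
    ring
  have hsum : ∑ l, starRingEnd ℂ (c l * u l) • ψ l = 0 := by
    funext x
    simpa [Finset.sum_apply] using inner_self_eq_zero (𝕜 := ℂ) |>.1 (hvanish x _)
  have hu : u = 0 := by
    funext l
    simpa [hc l] using Fintype.linearIndependent_iff.1 hψ _ hsum l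
  exact hμ (LinearMap.ext fun w => by simp [hμu, hu])

theorem exists_coordEquiv_of_diagonal (h : IsVRKHS K H J kf) (hψ : LinearIndependent ℂ ψ)
    (hc : ∀ l, c l ≠ 0) (hK : ∀ x y ξ, K x y ξ = ∑ l, ((c l : ℂ) * ⟪ψ l x, ξ⟫) • ψ l y) :
    ∃ Φ : H ≃ₗ[ℂ] (Fin N → ℂ),
      ∀ f, J f = ∑ l, Φ f l • ψ l ∧ ‖f‖ ^ 2 = ∑ l, ‖Φ f l‖ ^ 2 / c l := by
  obtain ⟨Φ, hΦ⟩ := h.exists_coord_of_diagonal hψ hK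
  have hbij : Function.Bijective Φ := ⟨h.coord_injective hΦ, h.coord_surjective hψ hc hK hΦ⟩
  refine ⟨.ofBijective Φ hbij, fun f => ⟨hΦ f, ?_⟩⟩
  have hff := h.inner_eq_sum_coord hψ hc hK hΦ f f
  rw [inner_self_eq_norm_sq_to_K] at hff
  simp only [Complex.conj_mul'] at hff
  show ‖f‖ ^ 2 = ∑ l, ‖Φ f l‖ ^ 2 / c l
  apply Complex.ofReal_injective
  push_cast
  exact hff

end Diagonal

end IsVRKHS

theorem stmt10_general {X Λ : Type*} [NormedAddCommGroup Λ] [InnerProductSpace ℂ Λ]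
    (n m : ℕ) (hnm : n ≤ m) (φ : Fin m → X → Λ) (hφ : LinearIndependent ℂ φ)
    (a : Fin n → ℝ) (b : Fin m → ℝ) (ha : ∀ j, 0 < a j) (hb : ∀ k, 0 < b k)
    (K G : X → X → Λ →L[ℂ] Λ)
    (hKdef : ∀ (x y : X) (ξ : Λ),
      K x y ξ = ∑ j, ((a j : ℂ) * ⟪φ (Fin.castLE hnm j) x, ξ⟫) • φ (Fin.castLE hnm j) y)
    (hGdef : ∀ (x y : X) (ξ : Λ), G x y ξ = ∑ k, ((b k : ℂ) * ⟪φ k x, ξ⟫) • φ k y)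
    {HK : Type*} [NormedAddCommGroup HK] [InnerProductSpace ℂ HK]
    (JK : HK →ₗ[ℂ] (X → Λ)) (kfK : X → Λ → HK) (hHK : IsVRKHS K HK JK kfK)
    {HG : Type*} [NormedAddCommGroup HG] [InnerProductSpace ℂ HG]
    (JG : HG →ₗ[ℂ] (X → Λ)) (kfG : X → Λ → HG) (hHG : IsVRKHS G HG JG kfG) :
    RKHSle JK JG ↔ ∀ j : Fin n, a j = b (Fin.castLE hnm j) := by
  have hcast := Fin.castLE_injective hnm
  obtain ⟨ΦK, hΦK⟩ := hHK.exists_coordEquiv_of_diagonal (hφ.comp _ hcast) (fun j => (ha j).ne')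
    hKdef
  obtain ⟨ΦG, hΦG⟩ := hHG.exists_coordEquiv_of_diagonal hφ (fun k => (hb k).ne') hGdef
  constructor
  · intro hle j
    obtain ⟨g, hJg, hg⟩ := hle (ΦK.symm (Pi.single j 1))
    have hΦg : ΦG g = Pi.single (Fin.castLE hnm j) 1 := by
      apply hφ.fintypeLinearCombination_injective
      simp [Fintype.linearCombination_apply, ← (hΦG g).1, hJg, (hΦK _).1, Pi.single_apply]
    have := congrArg (· ^ 2) hg
    simpa [(hΦG g).2, (hΦK _).2, hΦg, Pi.single_apply, apply_ite, ite_div, eq_comm] using this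
  · intro hab f
    set w : Fin m → ℂ := Function.extend (Fin.castLE hnm) (ΦK f) 0
    refine ⟨ΦG.symm w, ?_, ?_⟩
    · rw [(hΦG _).1, (hΦK f).1, LinearEquiv.apply_symm_apply]
      exact Fintype.sum_extend_zero hcast _ (fun k z => z • φ k) (fun _ => zero_smul _ _)
    · rw [← sq_eq_sq₀ (norm_nonneg _) (norm_nonneg _), (hΦG _).2, (hΦK f).2,
        LinearEquiv.apply_symm_apply]
      simp only [hab]
      exact Fintype.sum_extend_zero hcast _ (fun k z => ‖z‖ ^ 2 / b k) (fun _ => by simp)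

/-- For diagonal kernels K(x,y)ξ = Σ_{j≤n} a_j (ξ,φ_j(x)) φ_j(y) and
G(x,y)ξ = Σ_{k≤m} b_k (ξ,φ_k(x)) φ_k(y) with positive constants and linearly independent φ's,
H_K ⪯ H_G iff a_j = b_j for all j ≤ n. -/
theorem stmt10 {X Λ : Type*} [NormedAddCommGroup Λ] [InnerProductSpace ℂ Λ] [CompleteSpace Λ]
    (n m : ℕ) (hnm : n ≤ m) (φ : Fin m → X → Λ) (hφ : LinearIndependent ℂ φ)
    (a : Fin n → ℝ) (b : Fin m → ℝ) (ha : ∀ j, 0 < a j) (hb : ∀ k, 0 < b k)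
    (K G : X → X → Λ →L[ℂ] Λ)
    (hKdef : ∀ (x y : X) (ξ : Λ),
      K x y ξ = ∑ j, ((a j : ℂ) * ⟪φ (Fin.castLE hnm j) x, ξ⟫) • φ (Fin.castLE hnm j) y)
    (hGdef : ∀ (x y : X) (ξ : Λ), G x y ξ = ∑ k, ((b k : ℂ) * ⟪φ k x, ξ⟫) • φ k y)
    {HK : Type*} [NormedAddCommGroup HK] [InnerProductSpace ℂ HK] [CompleteSpace HK]
    (JK : HK →ₗ[ℂ] (X → Λ)) (kfK : X → Λ → HK) (hHK : IsVRKHS K HK JK kfK)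
    {HG : Type*} [NormedAddCommGroup HG] [InnerProductSpace ℂ HG] [CompleteSpace HG]
    (JG : HG →ₗ[ℂ] (X → Λ)) (kfG : X → Λ → HG) (hHG : IsVRKHS G HG JG kfG) :
    RKHSle JK JG ↔ ∀ j : Fin n, a j = b (Fin.castLE hnm j) :=
  stmt10_general n m hnm φ hφ a b ha hb K G hKdef hGdef JK kfK hHK JG kfG hHG
end
end

section
/- Let (Ω, 𝓕) be a measurable space, μ an 𝓛₊(Λ)-valued measure on 𝓕 of bounded variation, and Ψ: X × X × Ω → ℂ such that Ψ(·,·,t) is a scalar-valued positive-definite kernel on X for every t ∈ Ω, and Ψ(x,y,·) is bounded and 𝓕-measurable for all x, y. Then K(x,y) := ∫_Ω Ψ(x,y,t) dμ(t) is an 𝓛(Λ)-valued reproducing kernel on X. -/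
open MeasureTheory ContinuousLinearMap
open scoped ComplexOrder

noncomputable section

local notation "⟪" x ", " y "⟫" => @inner ℂ _ _ x y

/-! Positivity of `K` is the Schur product theorem applied level set by level set. If `F` is a
simple function with positive semidefinite matrix values, `∑ᵢⱼ ⟪ξᵢ, (∫ Fᵢⱼ dμ) ξⱼ⟫` is a sum over
the level sets `E` of `F` of the entry sums of the Hadamard products of the value of `F` on `E`
with the Gram matrix `(⟪ξᵢ, μ(E) ξⱼ⟫)ᵢⱼ`, hence nonnegative. The matrix function
`t ↦ (Ψ(xⱼ, xᵢ, t))ᵢⱼ` is a bounded pointwise limit of such simple functions, so dominated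
convergence finishes. Since `μ` and `K` are known only through their quadratic forms, the entries
`⟪a, (∫ f dμ) b⟫` are recovered by polarization. -/

theorem exists_forall_pi_norm_le {α ι E : Type*} [Fintype ι] [SeminormedAddCommGroup E]
    {F : α → ι → E} (h : ∀ i, ∃ C, ∀ a, ‖F a i‖ ≤ C) : ∃ C, ∀ a, ‖F a‖ ≤ C := by
  choose C hC using h
  refine ⟨∑ i, |C i|, fun a => (pi_norm_le_iff_of_nonneg (by positivity)).2 fun i => ?_⟩
  exact (hC i a).trans ((le_abs_self _).trans
    (Finset.single_le_sum (fun i _ => abs_nonneg (C i)) (Finset.mem_univ i)))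

section Polarization

variable {Λ : Type*} [NormedAddCommGroup Λ] [InnerProductSpace ℂ Λ]

def polarUnit : Fin 4 → ℂ := ![1, -1, Complex.I, -Complex.I]

theorem inner_map_eq_sum_polarUnit (T : Λ →L[ℂ] Λ) (a b : Λ) :
    ⟪a, T b⟫ = ∑ m, polarUnit m / 4 * ⟪b + polarUnit m • a, T (b + polarUnit m • a)⟫ := by
  simp only [Fin.sum_univ_four, polarUnit, Matrix.cons_val_zero, Matrix.cons_val_one,
    Matrix.cons_val_two, Matrix.cons_val_three, Matrix.head_cons, Matrix.tail_cons, map_add,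
    map_smul, inner_add_left, inner_add_right, inner_smul_left, inner_smul_right, map_neg,
    Complex.conj_I, map_one]
  ring_nf
  simp only [Complex.I_sq]
  ring

end Polarization

section Schur

open scoped Matrix

variable {Λ : Type*} [NormedAddCommGroup Λ] [InnerProductSpace ℂ Λ] {ι : Type*} [Fintype ι]

theorem ContinuousLinearMap.IsPositive.posSemidef_inner_map {P : Λ →L[ℂ] Λ} (hP : P.IsPositive)
    (ξ : ι → Λ) : (Matrix.of fun i j => ⟪ξ i, P (ξ j)⟫).PosSemidef := by
  refine Matrix.PosSemidef.of_dotProduct_mulVec_nonneg ?_ fun c => ?_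
  · ext i j
    simp only [Matrix.conjTranspose_apply, Matrix.of_apply, RCLike.star_def, inner_conj_symm]
    exact hP.isSymmetric _ _
  · have h : star c ⬝ᵥ (Matrix.of (fun i j => ⟪ξ i, P (ξ j)⟫) *ᵥ c)
        = ⟪∑ i, c i • ξ i, P (∑ j, c j • ξ j)⟫ := by
      simp only [dotProduct, Matrix.mulVec, Matrix.of_apply, map_sum, map_smul, sum_inner,
        inner_sum, inner_smul_left, inner_smul_right, Pi.star_apply, RCLike.star_def,
        Finset.mul_sum]
      rw [Finset.sum_comm]
      refine Finset.sum_congr rfl fun i _ => Finset.sum_congr rfl fun j _ => by ring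
    rw [h]
    exact hP.inner_nonneg_right _

theorem sum_mul_inner_map_nonneg {A : Matrix ι ι ℂ} (hA : A.PosSemidef) {P : Λ →L[ℂ] Λ}
    (hP : P.IsPositive) (ξ : ι → Λ) : 0 ≤ ∑ i, ∑ j, A i j * ⟪ξ i, P (ξ j)⟫ := by
  have := (hA.hadamard (hP.posSemidef_inner_map ξ)).dotProduct_mulVec_nonneg 1
  simpa [dotProduct, Matrix.mulVec, Matrix.hadamard] using this

theorem IsScalarKernel.posSemidef {Y : Type*} {k : Y → Y → ℂ} (hk : IsScalarKernel k) {n : ℕ}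
    (y : Fin n → Y) : (Matrix.of fun i j => k (y j) (y i)).PosSemidef := by
  refine Matrix.PosSemidef.of_dotProduct_mulVec_nonneg ?_ fun c => ?_
  · ext i j
    simp only [Matrix.conjTranspose_apply, Matrix.of_apply, RCLike.star_def]
    exact (hk.1 (y i) (y j)).symm
  · convert hk.2 n y c using 1
    simp only [dotProduct, Matrix.mulVec, Matrix.of_apply, Pi.star_apply, RCLike.star_def,
      Finset.mul_sum]
    rw [Finset.sum_comm]
    refine Finset.sum_congr rfl fun j _ => Finset.sum_congr rfl fun l _ => by ring

end Schur

section OperatorMeasure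

open Filter Topology

variable {Λ Ω : Type*} [NormedAddCommGroup Λ] [InnerProductSpace ℂ Λ] [MeasurableSpace Ω]
  {Q : Λ → Measure Ω}

/-- Stands for `⟪a, (∫ f dμ) b⟫`, cf. `inner_map_eq_sum_polarUnit`. -/
def sesqIntegral (Q : Λ → Measure Ω) (f : Ω → ℂ) (a b : Λ) : ℂ :=
  ∑ m, polarUnit m / 4 * ∫ t, f t ∂Q (b + polarUnit m • a)

theorem inner_eq_sesqIntegral {T : Λ →L[ℂ] Λ} {f : Ω → ℂ}
    (hT : ∀ ξ, ⟪ξ, T ξ⟫ = ∫ t, f t ∂Q ξ) (a b : Λ) : ⟪a, T b⟫ = sesqIntegral Q f a b := by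
  simp only [inner_map_eq_sum_polarUnit T a b, hT, sesqIntegral]

theorem eq_adjoint_of_inner_self_eq_integral [CompleteSpace Λ] {T S : Λ →L[ℂ] Λ} {f g : Ω → ℂ}
    (hT : ∀ ξ, ⟪ξ, T ξ⟫ = ∫ t, f t ∂Q ξ) (hS : ∀ ξ, ⟪ξ, S ξ⟫ = ∫ t, g t ∂Q ξ)
    (hfg : ∀ t, f t = starRingEnd ℂ (g t)) : T = adjoint S := by
  refine ContinuousLinearMap.coe_injective ((ext_inner_map _ _).1 fun ξ => ?_)
  rw [coe_coe, coe_coe, adjoint_inner_left, ← inner_conj_symm, hT, hS, ← integral_conj]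
  simp only [hfg, RCLike.conj_conj]

theorem tendsto_sesqIntegral [∀ ξ, IsFiniteMeasure (Q ξ)] {f : ℕ → Ω → ℂ} {g : Ω → ℂ}
    (hf : ∀ N, Measurable (f N)) {C : ℝ} (hC : ∀ N t, ‖f N t‖ ≤ C)
    (hlim : ∀ t, Tendsto (fun N => f N t) atTop (𝓝 (g t))) (a b : Λ) :
    Tendsto (fun N => sesqIntegral Q (f N) a b) atTop (𝓝 (sesqIntegral Q g a b)) := by
  refine tendsto_finsetSum _ fun m _ => Tendsto.const_mul _ ?_
  exact tendsto_integral_of_dominated_convergence (fun _ => C)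
    (fun N => (hf N).aestronglyMeasurable) (integrable_const C)
    (fun N => ae_of_all _ (hC N)) (ae_of_all _ hlim)

variable {μop : Set Ω → Λ →L[ℂ] Λ}
  (hdiag : ∀ (ξ : Λ) (E : Set Ω), MeasurableSet E → ⟪ξ, μop E ξ⟫ = ((Q ξ E).toReal : ℂ))
include hdiag

theorem sesqIntegral_simpleFunc_eq_sum [∀ ξ, IsFiniteMeasure (Q ξ)] {ι : Type*} [Fintype ι]
    (G : SimpleFunc Ω (ι → ι → ℂ)) (i j : ι) (a b : Λ) :
    sesqIntegral Q (fun t => G t i j) a b = ∑ y ∈ G.range, y i j * ⟪a, μop (G ⁻¹' {y}) b⟫ := by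
  have hG : ∀ ξ, ∫ t, G t i j ∂Q ξ = ∑ y ∈ G.range, (Q ξ).real (G ⁻¹' {y}) * y i j := fun ξ => by
    change ∫ t, G.map (fun y => y i j) t ∂Q ξ = _
    rw [← SimpleFunc.integral_eq_integral _ (SimpleFunc.integrable_of_isFiniteMeasure _),
      SimpleFunc.map_integral _ _ (SimpleFunc.integrable_of_isFiniteMeasure _) rfl]
    rfl
  simp only [sesqIntegral, hG, inner_map_eq_sum_polarUnit _ a b,
    hdiag _ _ (G.measurableSet_preimage _), Finset.mul_sum, measureReal_def]
  rw [Finset.sum_comm]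
  refine Finset.sum_congr rfl fun y _ => Finset.sum_congr rfl fun m _ => by ring

end OperatorMeasure

section Positivity

open Filter Topology

variable {Λ Ω : Type*} [NormedAddCommGroup Λ] [InnerProductSpace ℂ Λ] [MeasurableSpace Ω]
  {Q : Λ → Measure Ω} [∀ ξ, IsFiniteMeasure (Q ξ)] {μop : Set Ω → Λ →L[ℂ] Λ}
  (hμpos : ∀ E : Set Ω, MeasurableSet E → (μop E).IsPositive)
  (hdiag : ∀ (ξ : Λ) (E : Set Ω), MeasurableSet E → ⟪ξ, μop E ξ⟫ = ((Q ξ E).toReal : ℂ))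
  {ι : Type*} [Fintype ι]
include hμpos hdiag

theorem sum_sesqIntegral_simpleFunc_nonneg (G : SimpleFunc Ω (ι → ι → ℂ))
    (hG : ∀ t, (Matrix.of (G t)).PosSemidef) (ξ : ι → Λ) :
    0 ≤ ∑ i, ∑ j, sesqIntegral Q (fun t => G t i j) (ξ i) (ξ j) := by
  simp only [sesqIntegral_simpleFunc_eq_sum hdiag]
  rw [Finset.sum_congr rfl fun i _ => Finset.sum_comm, Finset.sum_comm]
  refine Finset.sum_nonneg fun y hy => ?_
  obtain ⟨t, rfl⟩ := G.mem_range.1 hy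
  exact sum_mul_inner_map_nonneg (hG t) (hμpos _ (G.measurableSet_preimage _)) ξ

theorem sum_sesqIntegral_nonneg {F : Ω → ι → ι → ℂ} (hF : Measurable F) {C : ℝ}
    (hC : ∀ t, ‖F t‖ ≤ C) (hpsd : ∀ t, (Matrix.of (F t)).PosSemidef) (ξ : ι → Λ) :
    0 ≤ ∑ i, ∑ j, sesqIntegral Q (fun t => F t i j) (ξ i) (ξ j) := by
  set s := {A : ι → ι → ℂ | (Matrix.of A).PosSemidef}
  have h0 : (0 : ι → ι → ℂ) ∈ s := Matrix.PosSemidef.zero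
  set G := SimpleFunc.approxOn F hF s 0 h0
  refine ge_of_tendsto' (tendsto_finsetSum _ fun i _ => tendsto_finsetSum _ fun j _ =>
    tendsto_sesqIntegral (fun N => ?_) (C := C + C) (fun N t => ?_) (fun t => ?_) _ _)
    fun N => sum_sesqIntegral_simpleFunc_nonneg hμpos hdiag (G N)
      (fun t => SimpleFunc.approxOn_mem hF h0 N t) ξ
  · exact (measurable_pi_apply j).comp ((measurable_pi_apply i).comp (G N).measurable)
  · calc ‖G N t i j‖ ≤ ‖G N t‖ := (norm_le_pi_norm _ j).trans (norm_le_pi_norm _ i)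
      _ ≤ ‖F t‖ + ‖F t‖ := SimpleFunc.norm_approxOn_zero_le hF h0 t N
      _ ≤ C + C := add_le_add (hC t) (hC t)
  · have := SimpleFunc.tendsto_approxOn hF h0 (subset_closure (hpsd t))
    exact tendsto_pi_nhds.1 (tendsto_pi_nhds.1 this i) j

end Positivity

/-- If μ is an 𝓛₊(Λ)-valued measure of bounded variation (encoded weakly: μop E is
a positive operator whose diagonal quadratic form (μ(E)ξ,ξ) is given by finite nonnegative
measures Q ξ) and Ψ(·,·,t) is a scalar positive-definite kernel for each t, with Ψ(x,y,·)
bounded and measurable, then K(x,y) = ∫_Ω Ψ(x,y,t) dμ(t) (encoded weakly via the quadratic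
forms) is an 𝓛(Λ)-valued reproducing kernel. -/
theorem stmt11 {X Λ Ω : Type*} [MeasurableSpace Ω]
    [NormedAddCommGroup Λ] [InnerProductSpace ℂ Λ] [CompleteSpace Λ]
    (Q : Λ → Measure Ω) (hQfin : ∀ ξ, IsFiniteMeasure (Q ξ))
    (μop : Set Ω → Λ →L[ℂ] Λ)
    (hμpos : ∀ E : Set Ω, MeasurableSet E → (μop E).IsPositive)
    (hdiag : ∀ (ξ : Λ) (E : Set Ω), MeasurableSet E → ⟪ξ, μop E ξ⟫ = ((Q ξ E).toReal : ℂ))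
    (Ψ : X → X → Ω → ℂ)
    (hΨkernel : ∀ t : Ω, IsScalarKernel fun x y => Ψ x y t)
    (hΨmeas : ∀ x y, Measurable (Ψ x y))
    (hΨbdd : ∀ x y, ∃ C : ℝ, ∀ t, ‖Ψ x y t‖ ≤ C)
    (K : X → X → Λ →L[ℂ] Λ)
    (hKdef : ∀ (x y : X) (ξ : Λ), ⟪ξ, K x y ξ⟫ = ∫ t, Ψ x y t ∂(Q ξ)) :
    IsOpKernel K := by
  refine ⟨fun x y => eq_adjoint_of_inner_self_eq_integral (hKdef x y) (hKdef y x)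
    fun t => (hΨkernel t).1 y x, fun n x ξ => ?_⟩
  set F : Ω → Fin n → Fin n → ℂ := fun t i j => Ψ (x j) (x i) t
  have hF : Measurable F :=
    measurable_pi_lambda _ fun i => measurable_pi_lambda _ fun j => hΨmeas _ _
  obtain ⟨C, hC⟩ := exists_forall_pi_norm_le fun i =>
    exists_forall_pi_norm_le fun j => hΨbdd (x j) (x i)
  have := sum_sesqIntegral_nonneg hμpos hdiag hF hC (fun t => (hΨkernel t).posSemidef x) ξ
  rw [Finset.sum_comm]
  simpa only [inner_eq_sesqIntegral (hKdef _ _)] using this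
end
end
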